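/- arXiv:math/9802103 — 4 statements merged into one kernel-verified Lean document; each statement's English description precedes it below -/
import Mathlib

section
/- Fix separable complex Hilbert spaces ℋ and 𝒦, a self-adjoint (possibly unbounded) operator H₀ in ℋ, and a bounded operator K : 𝒦 → ℋ. Let L₁, L₂ be bounded self-adjoint operators in 𝒦. Then for every z ∈ ℂ∖ℝ the operators I_𝒦 + (L₂−L₁)M_{L₁}(z) and I_𝒦 + M_{L₁}(z)(L₂−L₁) are boundedly invertible in B(𝒦) and M_{L₂}(z) = M_{L₁}(z)(I_𝒦 + (L₂−L₁)M_{L₁}(z))^{-1} = (I_𝒦 + M_{L₁}(z)(L₂−L₁))^{-1} M_{L₁}(z). -/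
open ContinuousLinearMap

/-- `R` is the resolvent family of the (possibly unbounded) operator `T`:
for every non-real `z`, `R z` is a two-sided bounded inverse of `T - z`. -/
def IsResolventOf {H : Type*} [NormedAddCommGroup H] [InnerProductSpace ℂ H]
    [CompleteSpace H] (T : H →ₗ.[ℂ] H) (R : ℂ → H →L[ℂ] H) : Prop :=
  ∀ z : ℂ, z.im ≠ 0 →
    (∃ hmem : ∀ x : H, R z x ∈ T.domain,
      (∀ x : H, T ⟨R z x, hmem x⟩ - z • R z x = x)) ∧
    (∀ u : T.domain, R z (T u - z • (u : H)) = u)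

/-- Symmetry of an unbounded operator. -/
def PMapSymmetric {H : Type*} [NormedAddCommGroup H] [InnerProductSpace ℂ H]
    (T : H →ₗ.[ℂ] H) : Prop :=
  ∀ u v : T.domain, (inner ℂ (T u) (v : H) : ℂ) = inner ℂ (u : H) (T v)

/-! The second resolvent identity gives `M₁ (L₂ - L₁) M₂ = M₁ - M₂` and
`M₂ (L₂ - L₁) M₁ = M₁ - M₂`. In any ring these two identities alone show that
`1 + (L₂ - L₁) M₁` has inverse `1 - (L₂ - L₁) M₂` and `1 + M₁ (L₂ - L₁)` has inverse
`1 - M₂ (L₂ - L₁)`, and both formulas for `M₂` follow. -/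

section RingInverse

variable {R : Type*} [Ring R] {a b d : R}

theorem isUnit_one_add_mul_and_inverse_eq (hab : a * d * b = a - b) (hba : b * d * a = a - b) :
    IsUnit (1 + d * a) ∧ Ring.inverse (1 + d * a) = 1 - d * b := by
  let u : Rˣ :=
    { val := 1 + d * a
      inv := 1 - d * b
      val_inv := by
        calc (1 + d * a) * (1 - d * b) = 1 + d * (a - b - a * d * b) := by noncomm_ring
          _ = 1 := by rw [hab, sub_self, mul_zero, add_zero]
      inv_val := by
        calc (1 - d * b) * (1 + d * a) = 1 + d * (a - b - b * d * a) := by noncomm_ring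
          _ = 1 := by rw [hba, sub_self, mul_zero, add_zero] }
  exact ⟨u.isUnit, Ring.inverse_unit u⟩

theorem isUnit_one_add_mul_and_inverse_eq' (hab : a * d * b = a - b) (hba : b * d * a = a - b) :
    IsUnit (1 + a * d) ∧ Ring.inverse (1 + a * d) = 1 - b * d := by
  let u : Rˣ :=
    { val := 1 + a * d
      inv := 1 - b * d
      val_inv := by
        calc (1 + a * d) * (1 - b * d) = 1 + (a - b - a * d * b) * d := by noncomm_ring
          _ = 1 := by rw [hab, sub_self, zero_mul, add_zero]
      inv_val := by
        calc (1 - b * d) * (1 + a * d) = 1 + (a - b - b * d * a) * d := by noncomm_ring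
          _ = 1 := by rw [hba, sub_self, zero_mul, add_zero] }
  exact ⟨u.isUnit, Ring.inverse_unit u⟩

theorem eq_mul_inverse_one_add_mul (hab : a * d * b = a - b) (hba : b * d * a = a - b) :
    b = a * Ring.inverse (1 + d * a) := by
  rw [(isUnit_one_add_mul_and_inverse_eq hab hba).2, mul_sub, mul_one, ← mul_assoc, hab,
    sub_sub_cancel]

theorem eq_inverse_one_add_mul_mul (hab : a * d * b = a - b) (hba : b * d * a = a - b) :
    b = Ring.inverse (1 + a * d) * a := by
  rw [(isUnit_one_add_mul_and_inverse_eq' hab hba).2, sub_mul, one_mul, hba, sub_sub_cancel]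

end RingInverse

section Resolvents

variable {ℋ 𝒦 : Type*} [NormedAddCommGroup ℋ] [InnerProductSpace ℂ ℋ] [CompleteSpace ℋ]
  [NormedAddCommGroup 𝒦] [InnerProductSpace ℂ 𝒦] [CompleteSpace 𝒦]

theorem IsResolventOf.comp_sub_comp_eq_sub {T₀ T₁ T₂ : ℋ →ₗ.[ℂ] ℋ} {R₁ R₂ : ℂ → ℋ →L[ℂ] ℋ}
    {V₁ V₂ : ℋ →L[ℂ] ℋ} (hdom₁ : T₁.domain = T₀.domain) (hdom₂ : T₂.domain = T₀.domain)
    (hT₁ : ∀ (x : ℋ) (hx : x ∈ T₀.domain) (hx' : x ∈ T₁.domain),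
      T₁ ⟨x, hx'⟩ = T₀ ⟨x, hx⟩ + V₁ x)
    (hT₂ : ∀ (x : ℋ) (hx : x ∈ T₀.domain) (hx' : x ∈ T₂.domain),
      T₂ ⟨x, hx'⟩ = T₀ ⟨x, hx⟩ + V₂ x)
    (hR₁ : IsResolventOf T₁ R₁) (hR₂ : IsResolventOf T₂ R₂) {z : ℂ} (hz : z.im ≠ 0) :
    R₁ z ∘L (V₂ - V₁) ∘L R₂ z = R₁ z - R₂ z := by
  obtain ⟨⟨hmem₂, hR₂_right⟩, -⟩ := hR₂ z hz
  obtain ⟨-, hR₁_left⟩ := hR₁ z hz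
  ext x
  set u := R₂ z x
  have hu₀ : u ∈ T₀.domain := hdom₂ ▸ hmem₂ x
  have hu₁ : u ∈ T₁.domain := hdom₁.symm ▸ hu₀
  have hT₁u : T₁ ⟨u, hu₁⟩ - z • u = x - (V₂ - V₁) u := by
    rw [← hR₂_right x, hT₁ u hu₀, hT₂ u hu₀, sub_apply]
    abel
  have hu : R₁ z x - R₁ z ((V₂ - V₁) u) = u := by
    rw [← map_sub, ← hT₁u]
    exact hR₁_left ⟨u, hu₁⟩
  calc (R₁ z ∘L (V₂ - V₁) ∘L R₂ z) x = R₁ z x - (R₁ z x - R₁ z ((V₂ - V₁) u)) :=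
        (sub_sub_cancel _ _).symm
    _ = (R₁ z - R₂ z) x := by rw [hu]; rfl

theorem IsResolventOf.adjoint_comp_comp_mul_sub_mul {T₀ T₁ T₂ : ℋ →ₗ.[ℂ] ℋ}
    {R₁ R₂ : ℂ → ℋ →L[ℂ] ℋ} (K : 𝒦 →L[ℂ] ℋ) (L₁ L₂ : 𝒦 →L[ℂ] 𝒦)
    (hdom₁ : T₁.domain = T₀.domain) (hdom₂ : T₂.domain = T₀.domain)
    (hT₁ : ∀ (x : ℋ) (hx : x ∈ T₀.domain) (hx' : x ∈ T₁.domain),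
      T₁ ⟨x, hx'⟩ = T₀ ⟨x, hx⟩ + K (L₁ (adjoint K x)))
    (hT₂ : ∀ (x : ℋ) (hx : x ∈ T₀.domain) (hx' : x ∈ T₂.domain),
      T₂ ⟨x, hx'⟩ = T₀ ⟨x, hx⟩ + K (L₂ (adjoint K x)))
    (hR₁ : IsResolventOf T₁ R₁) (hR₂ : IsResolventOf T₂ R₂) {z : ℂ} (hz : z.im ≠ 0) :
    (adjoint K ∘L R₁ z ∘L K) * (L₂ - L₁) * (adjoint K ∘L R₂ z ∘L K) =
      adjoint K ∘L R₁ z ∘L K - adjoint K ∘L R₂ z ∘L K := by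
  rw [← comp_sub, ← sub_comp, ← comp_sub_comp_eq_sub (V₁ := K ∘L L₁ ∘L adjoint K)
    (V₂ := K ∘L L₂ ∘L adjoint K) hdom₁ hdom₂ hT₁ hT₂ hR₁ hR₂ hz]
  ext k
  simp only [mul_apply_eq_comp, comp_apply, sub_apply, map_sub]

end Resolvents

theorem statement0_general
    {ℋ : Type*} [NormedAddCommGroup ℋ] [InnerProductSpace ℂ ℋ] [CompleteSpace ℋ]
    {𝒦 : Type*} [NormedAddCommGroup 𝒦] [InnerProductSpace ℂ 𝒦] [CompleteSpace 𝒦]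
    (H₀ : ℋ →ₗ.[ℂ] ℋ)
    (K : 𝒦 →L[ℂ] ℋ)
    (L₁ L₂ : 𝒦 →L[ℂ] 𝒦)
    -- the perturbed operators H_{Lℓ} = H₀ + K Lℓ K*, dom(H_{Lℓ}) = dom(H₀):
    (HL₁ HL₂ : ℋ →ₗ.[ℂ] ℋ)
    (hdom₁ : HL₁.domain = H₀.domain) (hdom₂ : HL₂.domain = H₀.domain)
    (hHL₁ : ∀ (x : ℋ) (hx : x ∈ H₀.domain) (hx' : x ∈ HL₁.domain),
      HL₁ ⟨x, hx'⟩ = H₀ ⟨x, hx⟩ + K (L₁ ((adjoint K) x)))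
    (hHL₂ : ∀ (x : ℋ) (hx : x ∈ H₀.domain) (hx' : x ∈ HL₂.domain),
      HL₂ ⟨x, hx'⟩ = H₀ ⟨x, hx⟩ + K (L₂ ((adjoint K) x)))
    (R₁ R₂ : ℂ → ℋ →L[ℂ] ℋ)
    (hR₁ : IsResolventOf HL₁ R₁) (hR₂ : IsResolventOf HL₂ R₂)
    -- the Herglotz operators M_{Lℓ}(z) = K* (H_{Lℓ} - z)⁻¹ K:
    (M₁ M₂ : ℂ → 𝒦 →L[ℂ] 𝒦)
    (hM₁ : ∀ z : ℂ, M₁ z = (adjoint K).comp ((R₁ z).comp K))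
    (hM₂ : ∀ z : ℂ, M₂ z = (adjoint K).comp ((R₂ z).comp K)) :
    ∀ z : ℂ, z.im ≠ 0 →
      IsUnit (1 + (L₂ - L₁) * M₁ z) ∧
      IsUnit (1 + M₁ z * (L₂ - L₁)) ∧
      M₂ z = M₁ z * Ring.inverse (1 + (L₂ - L₁) * M₁ z) ∧
      M₂ z = Ring.inverse (1 + M₁ z * (L₂ - L₁)) * M₁ z := by
  intro z hz
  have hab : M₁ z * (L₂ - L₁) * M₂ z = M₁ z - M₂ z := by
    rw [hM₁, hM₂]
    exact IsResolventOf.adjoint_comp_comp_mul_sub_mul K L₁ L₂ hdom₁ hdom₂ hHL₁ hHL₂ hR₁ hR₂ hz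
  have hba : M₂ z * (L₂ - L₁) * M₁ z = M₁ z - M₂ z := by
    rw [← neg_sub L₁ L₂, mul_neg, neg_mul, hM₁, hM₂,
      IsResolventOf.adjoint_comp_comp_mul_sub_mul K L₂ L₁ hdom₂ hdom₁ hHL₂ hHL₁ hR₂ hR₁ hz,
      neg_sub]
  exact ⟨(isUnit_one_add_mul_and_inverse_eq hab hba).1,
    (isUnit_one_add_mul_and_inverse_eq' hab hba).1,
    eq_mul_inverse_one_add_mul hab hba, eq_inverse_one_add_mul_mul hab hba⟩

/-- Theorem 2.3 of Gesztesy–Kalton–Makarov–Tsekanovskii.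
Let `H₀` be a self-adjoint operator in the separable complex Hilbert space `ℋ`
(encoded as a densely defined symmetric operator possessing a resolvent at every
non-real point), `K : 𝒦 → ℋ` bounded, and `L₁, L₂` bounded self-adjoint operators in `𝒦`.
With `H_{Lℓ} = H₀ + K Lℓ K*` (same domain as `H₀`, with resolvents `R₁, R₂`) and
`M_{Lℓ}(z) = K* (H_{Lℓ} - z)⁻¹ K`, for every `z ∈ ℂ∖ℝ` the operators
`I + (L₂-L₁) M_{L₁}(z)` and `I + M_{L₁}(z) (L₂-L₁)` are boundedly invertible and
`M_{L₂}(z) = M_{L₁}(z) (I + (L₂-L₁) M_{L₁}(z))⁻¹ = (I + M_{L₁}(z)(L₂-L₁))⁻¹ M_{L₁}(z)`. -/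
theorem statement0
    {ℋ : Type*} [NormedAddCommGroup ℋ] [InnerProductSpace ℂ ℋ] [CompleteSpace ℋ]
    [TopologicalSpace.SeparableSpace ℋ]
    {𝒦 : Type*} [NormedAddCommGroup 𝒦] [InnerProductSpace ℂ 𝒦] [CompleteSpace 𝒦]
    [TopologicalSpace.SeparableSpace 𝒦]
    (H₀ : ℋ →ₗ.[ℂ] ℋ) (hdense : Dense (H₀.domain : Set ℋ))
    (hsym : PMapSymmetric H₀)
    (R₀ : ℂ → ℋ →L[ℂ] ℋ) (hR₀ : IsResolventOf H₀ R₀)  -- self-adjointness of H₀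
    (K : 𝒦 →L[ℂ] ℋ)
    (L₁ L₂ : 𝒦 →L[ℂ] 𝒦) (hL₁ : IsSelfAdjoint L₁) (hL₂ : IsSelfAdjoint L₂)
    -- the perturbed operators H_{Lℓ} = H₀ + K Lℓ K*, dom(H_{Lℓ}) = dom(H₀):
    (HL₁ HL₂ : ℋ →ₗ.[ℂ] ℋ)
    (hdom₁ : HL₁.domain = H₀.domain) (hdom₂ : HL₂.domain = H₀.domain)
    (hHL₁ : ∀ (x : ℋ) (hx : x ∈ H₀.domain) (hx' : x ∈ HL₁.domain),
      HL₁ ⟨x, hx'⟩ = H₀ ⟨x, hx⟩ + K (L₁ ((adjoint K) x)))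
    (hHL₂ : ∀ (x : ℋ) (hx : x ∈ H₀.domain) (hx' : x ∈ HL₂.domain),
      HL₂ ⟨x, hx'⟩ = H₀ ⟨x, hx⟩ + K (L₂ ((adjoint K) x)))
    (R₁ R₂ : ℂ → ℋ →L[ℂ] ℋ)
    (hR₁ : IsResolventOf HL₁ R₁) (hR₂ : IsResolventOf HL₂ R₂)
    -- the Herglotz operators M_{Lℓ}(z) = K* (H_{Lℓ} - z)⁻¹ K:
    (M₁ M₂ : ℂ → 𝒦 →L[ℂ] 𝒦)
    (hM₁ : ∀ z : ℂ, M₁ z = (adjoint K).comp ((R₁ z).comp K))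
    (hM₂ : ∀ z : ℂ, M₂ z = (adjoint K).comp ((R₂ z).comp K)) :
    ∀ z : ℂ, z.im ≠ 0 →
      IsUnit (1 + (L₂ - L₁) * M₁ z) ∧
      IsUnit (1 + M₁ z * (L₂ - L₁)) ∧
      M₂ z = M₁ z * Ring.inverse (1 + (L₂ - L₁) * M₁ z) ∧
      M₂ z = Ring.inverse (1 + M₁ z * (L₂ - L₁)) * M₁ z :=
  statement0_general H₀ K L₁ L₂ HL₁ HL₂ hdom₁ hdom₂ hHL₁ hHL₂ R₁ R₂ hR₁ hR₂ M₁ M₂ hM₁ hM₂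
end

section
/- Let H₁ and H₂ be self-adjoint extensions of Ḣ and z ∈ ρ(H₁) ∩ ρ(H₂). Let α_{1,2} be a self-adjoint (possibly unbounded) operator in 𝒩₊ with e^{−2iα_{1,2}} = −C_{H₂}C_{H₁}^{-1}|_{𝒩₊}, where C_H = (H+i)(H−i)^{-1} denotes the Cayley transform. Then M_{H₂,𝒩₊}(z) = e^{−iα_{1,2}} (cos(α_{1,2}) + sin(α_{1,2}) M_{H₁,𝒩₊}(z)) (sin(α_{1,2}) − cos(α_{1,2}) M_{H₁,𝒩₊}(z))^{-1} e^{iα_{1,2}}. -/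
open ContinuousLinearMap MeasureTheory

/-- `R z` is a two-sided bounded inverse of `T - z` for every `z` in the set `ρ`
(so that `ρ` is contained in the resolvent set of `T`). -/
def IsResolventOn {H : Type*} [NormedAddCommGroup H] [InnerProductSpace ℂ H]
    [CompleteSpace H] (T : H →ₗ.[ℂ] H) (R : ℂ → H →L[ℂ] H) (ρ : Set ℂ) : Prop :=
  ∀ z ∈ ρ,
    (∃ hmem : ∀ x : H, R z x ∈ T.domain,
      (∀ x : H, T ⟨R z x, hmem x⟩ - z • R z x = x)) ∧
    (∀ u : T.domain, R z (T u - z • (u : H)) = u)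

namespace Stmt5Aux

variable {H : Type*} [NormedAddCommGroup H] [InnerProductSpace ℂ H] [CompleteSpace H]

local notation "⟪" x ", " y "⟫" => @inner ℂ _ _ x y

lemma resolvent_sub {T : H →ₗ.[ℂ] H} {R : ℂ → H →L[ℂ] H} {ρ : Set ℂ}
    (hR : IsResolventOn T R ρ) {z w : ℂ} (hz : z ∈ ρ) (hw : w ∈ ρ) (x : H) :
    R z x - R w x = (z - w) • R z (R w x) := by
  obtain ⟨⟨hmz, heqz⟩, hinvz⟩ := hR z hz
  obtain ⟨⟨hmw, heqw⟩, hinvw⟩ := hR w hw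
  have h1 := hinvz ⟨R w x, hmw x⟩
  have h2 : T ⟨R w x, hmw x⟩ = x + w • R w x := by
    have := heqw x
    rw [sub_eq_iff_eq_add] at this
    simpa using this
  rw [h2] at h1
  have h3 : x + w • R w x - z • R w x = x + (w - z) • R w x := by
    rw [sub_smul]; abel
  rw [h3, map_add, (R z).map_smul] at h1
  have h1' : R z x + (w - z) • R z (R w x) = R w x := by simpa using h1
  conv_lhs => rw [← h1']
  simp only [sub_smul]
  abel

lemma resolvent_adjoint_apply {T : H →ₗ.[ℂ] H} (hsym : PMapSymmetric T)
    {R : ℂ → H →L[ℂ] H} {ρ : Set ℂ} (hR : IsResolventOn T R ρ)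
    {z : ℂ} (hz : z ∈ ρ) (hz' : (starRingEnd ℂ) z ∈ ρ) (x y : H) :
    ⟪R z x, y⟫ = ⟪x, R ((starRingEnd ℂ) z) y⟫ := by
  obtain ⟨⟨hmz, heqz⟩, hinvz⟩ := hR z hz
  obtain ⟨⟨hmz', heqz'⟩, hinvz'⟩ := hR ((starRingEnd ℂ) z) hz'
  set u : T.domain := ⟨R z x, hmz x⟩ with hu
  set v : T.domain := ⟨R ((starRingEnd ℂ) z) y, hmz' y⟩ with hv
  have hy : T v - (starRingEnd ℂ) z • (v : H) = y := heqz' y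
  have hx : T u - z • (u : H) = x := heqz x
  show ⟪(u : H), y⟫ = ⟪x, (v : H)⟫
  have e1 : ⟪(u : H), y⟫ = ⟪(u : H), T v⟫ - (starRingEnd ℂ) z * ⟪(u : H), (v : H)⟫ := by
    conv_lhs => rw [← hy]
    rw [inner_sub_right, inner_smul_right]
  have e2 : ⟪x, (v : H)⟫ = ⟪(u : H), T v⟫ - (starRingEnd ℂ) z * ⟪(u : H), (v : H)⟫ := by
    conv_lhs => rw [← hx]
    rw [inner_sub_left, inner_smul_left, hsym u v]
  rw [e1, e2]

lemma resolvent_fixed {Hdot T : H →ₗ.[ℂ] H} (hext : Hdot ≤ T)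
    {R : ℂ → H →L[ℂ] H} {ρ : Set ℂ} (hR : IsResolventOn T R ρ)
    {z : ℂ} (hz : z ∈ ρ) (f : Hdot.domain) :
    R z (Hdot f - z • (f : H)) = (f : H) := by
  obtain ⟨⟨hmz, heqz⟩, hinvz⟩ := hR z hz
  have hdom : (f : H) ∈ T.domain := hext.1 f.2
  have hval : Hdot f = T ⟨(f : H), hdom⟩ := hext.2 rfl
  rw [hval]
  exact hinvz ⟨(f : H), hdom⟩

end Stmt5Aux

instance stmt5Tower {M : Type*} [NormedAddCommGroup M] [NormedSpace ℂ M] :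
    IsScalarTower ℂ (M →L[ℂ] M) (M →L[ℂ] M) :=
  ⟨fun c f g => by ext x; simp [ContinuousLinearMap.smul_apply, ContinuousLinearMap.mul_apply]⟩

instance stmt5Comm {M : Type*} [NormedAddCommGroup M] [NormedSpace ℂ M] :
    SMulCommClass ℂ (M →L[ℂ] M) (M →L[ℂ] M) :=
  ⟨fun c f g => by ext x; simp [ContinuousLinearMap.smul_apply, ContinuousLinearMap.mul_apply]⟩

namespace Stmt5Aux

variable {H : Type*} [NormedAddCommGroup H] [InnerProductSpace ℂ H] [CompleteSpace H]

local notation "⟪" x ", " y "⟫" => @inner ℂ _ _ x y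

lemma weak_transfer {Hdot T : H →ₗ.[ℂ] H} (hext : Hdot ≤ T) (hsym : PMapSymmetric T)
    {R : ℂ → H →L[ℂ] H} {ρ : Set ℂ} (hR : IsResolventOn T R ρ)
    {z' w : ℂ} (hw : w ∈ ρ) (hw' : (starRingEnd ℂ) w ∈ ρ) {v : H}
    (hv : ∀ f : Hdot.domain, ⟪v, Hdot f⟫ = (starRingEnd ℂ) z' * ⟪v, (f : H)⟫)
    (f : Hdot.domain) :
    ⟪v + (w - z') • R w v, Hdot f⟫ = (starRingEnd ℂ) w * ⟪v + (w - z') • R w v, (f : H)⟫ := by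
  have hfix : R ((starRingEnd ℂ) w) (Hdot f) = (f : H) +
      (starRingEnd ℂ) w • R ((starRingEnd ℂ) w) (f : H) := by
    have h := resolvent_fixed hext hR hw' f
    rw [map_sub, (R ((starRingEnd ℂ) w)).map_smul, sub_eq_iff_eq_add] at h
    exact h
  have hadj1 : ⟪R w v, Hdot f⟫ = ⟪v, (f : H)⟫ +
      (starRingEnd ℂ) w * ⟪v, R ((starRingEnd ℂ) w) (f : H)⟫ := by
    rw [resolvent_adjoint_apply hsym hR hw hw', hfix, inner_add_right, inner_smul_right]
  have hadj2 : ⟪R w v, (f : H)⟫ = ⟪v, R ((starRingEnd ℂ) w) (f : H)⟫ :=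
    resolvent_adjoint_apply hsym hR hw hw' v f
  rw [inner_add_left, inner_add_left, inner_smul_left, inner_smul_left, hadj1, hadj2, hv f, map_sub]
  ring

lemma inv_pt {T : H →ₗ.[ℂ] H} {R : ℂ → H →L[ℂ] H} {ρ : Set ℂ}
    (hR : IsResolventOn T R ρ) {z w : ℂ} (hz : z ∈ ρ) (hw : w ∈ ρ) (v : H) :
    (v + (w - z) • R w v) + (z - w) • R z (v + (w - z) • R w v) = v := by
  have hres := resolvent_sub hR hz hw v
  rw [map_add, (R z).map_smul]
  have hsw : (z - w) • ((w - z) • R z (R w v)) = (w - z) • ((z - w) • R z (R w v)) := by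
    rw [smul_comm]
  rw [smul_add, hsw, ← hres, smul_sub]
  simp only [sub_smul]
  abel

end Stmt5Aux

namespace Stmt5Aux

variable {H : Type*} [NormedAddCommGroup H] [InnerProductSpace ℂ H] [CompleteSpace H]

local notation "⟪" x ", " y "⟫" => @inner ℂ _ _ x y

lemma conj_mem {ρ : Set ℂ} (hρ : {z : ℂ | z.im ≠ 0} ⊆ ρ) {z : ℂ} (hz : z ∈ ρ) :
    (starRingEnd ℂ) z ∈ ρ := by
  by_cases h : z.im = 0
  · rwa [Complex.conj_eq_iff_im.mpr h]
  · exact hρ (by simpa using h)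

lemma resolvent_adjoint {T : H →ₗ.[ℂ] H} (hsym : PMapSymmetric T)
    {R : ℂ → H →L[ℂ] H} {ρ : Set ℂ} (hR : IsResolventOn T R ρ)
    {z : ℂ} (hz : z ∈ ρ) (hz' : (starRingEnd ℂ) z ∈ ρ) :
    ContinuousLinearMap.adjoint (R z) = R ((starRingEnd ℂ) z) := by
  symm
  rw [ContinuousLinearMap.eq_adjoint_iff]
  intro x y
  have h := resolvent_adjoint_apply hsym hR hz'
    (by rwa [Complex.conj_conj] : (starRingEnd ℂ) ((starRingEnd ℂ) z) ∈ ρ) x y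
  rwa [Complex.conj_conj] at h

lemma krein (Hdot : H →ₗ.[ℂ] H) (𝒩p : Submodule ℂ H) [CompleteSpace 𝒩p]
    (h𝒩p : ∀ u : H, u ∈ 𝒩p ↔ ∀ f : Hdot.domain,
      (inner ℂ u (Hdot f) : ℂ) = inner ℂ (Complex.I • u) (f : H))
    (Ha Hb : H →ₗ.[ℂ] H) (hexta : Hdot ≤ Ha) (hextb : Hdot ≤ Hb)
    (hsyma : PMapSymmetric Ha) (hsymb : PMapSymmetric Hb)
    (ρa ρb : Set ℂ) (hρa : {z : ℂ | z.im ≠ 0} ⊆ ρa) (hρb : {z : ℂ | z.im ≠ 0} ⊆ ρb)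
    (Ra Rb : ℂ → H →L[ℂ] H) (hRa : IsResolventOn Ha Ra ρa) (hRb : IsResolventOn Hb Rb ρb)
    {z : ℂ} (hza : z ∈ ρa) (hzb : z ∈ ρb) :
    𝒩p.orthogonalProjectionOnto.comp ((Rb z - Ra z).comp 𝒩p.subtypeL) =
      ((1 : 𝒩p →L[ℂ] 𝒩p) + (z - Complex.I) •
          (𝒩p.orthogonalProjectionOnto.comp ((Rb z).comp 𝒩p.subtypeL))) *
      (𝒩p.orthogonalProjectionOnto.comp ((Rb Complex.I - Ra (-Complex.I) -
          ((2 : ℂ) * Complex.I) • ((Rb Complex.I).comp (Ra (-Complex.I)))).comp 𝒩p.subtypeL)) *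
      ((1 : 𝒩p →L[ℂ] 𝒩p) + (z + Complex.I) •
          (𝒩p.orthogonalProjectionOnto.comp ((Ra z).comp 𝒩p.subtypeL))) := by
  have hIa : Complex.I ∈ ρa := hρa (by simp)
  have hIb : Complex.I ∈ ρb := hρb (by simp)
  have hnIa : -Complex.I ∈ ρa := hρa (by simp)
  have hnIb : -Complex.I ∈ ρb := hρb (by simp)
  have hcza : (starRingEnd ℂ) z ∈ ρa := conj_mem hρa hza
  have hczb : (starRingEnd ℂ) z ∈ ρb := conj_mem hρb hzb
  have hcI : (starRingEnd ℂ) Complex.I = -Complex.I := Complex.conj_I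
  have hcnI : (starRingEnd ℂ) (-Complex.I) = Complex.I := by
    rw [map_neg, Complex.conj_I, neg_neg]
  have hcIa : (starRingEnd ℂ) Complex.I ∈ ρa := by rw [hcI]; exact hnIa
  have hcIb : (starRingEnd ℂ) Complex.I ∈ ρb := by rw [hcI]; exact hnIb
  have hcnIa : (starRingEnd ℂ) (-Complex.I) ∈ ρa := by rw [hcnI]; exact hIa
  have hccza : (starRingEnd ℂ) ((starRingEnd ℂ) z) ∈ ρa := by
    rw [Complex.conj_conj]; exact hza
  have hcczb : (starRingEnd ℂ) ((starRingEnd ℂ) z) ∈ ρb := by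
    rw [Complex.conj_conj]; exact hzb
  -- weak deficiency property of the resolvent difference
  have hWD : ∀ (w : ℂ), w ∈ ρa → w ∈ ρb → (starRingEnd ℂ) w ∈ ρa → (starRingEnd ℂ) w ∈ ρb →
      ∀ (x : H) (f : Hdot.domain),
      ⟪Rb w x - Ra w x, Hdot f⟫ = (starRingEnd ℂ) w * ⟪Rb w x - Ra w x, (f : H)⟫ := by
    intro w hwa hwb hwa' hwb' x f
    have hfb : Rb ((starRingEnd ℂ) w) (Hdot f) = (f : H) +
        (starRingEnd ℂ) w • Rb ((starRingEnd ℂ) w) (f : H) := by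
      have h := resolvent_fixed hextb hRb hwb' f
      rw [map_sub, (Rb _).map_smul, sub_eq_iff_eq_add] at h
      exact h
    have hfa : Ra ((starRingEnd ℂ) w) (Hdot f) = (f : H) +
        (starRingEnd ℂ) w • Ra ((starRingEnd ℂ) w) (f : H) := by
      have h := resolvent_fixed hexta hRa hwa' f
      rw [map_sub, (Ra _).map_smul, sub_eq_iff_eq_add] at h
      exact h
    rw [inner_sub_left, inner_sub_left,
      resolvent_adjoint_apply hsymb hRb hwb hwb' x (Hdot f),
      resolvent_adjoint_apply hsyma hRa hwa hwa' x (Hdot f),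
      resolvent_adjoint_apply hsymb hRb hwb hwb' x (f : H),
      resolvent_adjoint_apply hsyma hRa hwa hwa' x (f : H),
      hfb, hfa]
    simp only [inner_add_right, inner_smul_right]
    ring
  -- membership in 𝒩p after transferring to the point i, family b
  have hmemb : ∀ (w : ℂ), w ∈ ρa → w ∈ ρb → (starRingEnd ℂ) w ∈ ρa → (starRingEnd ℂ) w ∈ ρb →
      ∀ x : H, (Rb w x - Ra w x) + (Complex.I - w) • Rb Complex.I (Rb w x - Ra w x) ∈ 𝒩p := by
    intro w hwa hwb hwa' hwb' x
    apply (h𝒩p _).mpr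
    intro f
    rw [inner_smul_left]
    exact weak_transfer hextb hsymb hRb hIb hcIb (hWD w hwa hwb hwa' hwb' x) f
  -- membership in 𝒩p after transferring to the point i, family a
  have hmema : ∀ (w : ℂ), w ∈ ρa → w ∈ ρb → (starRingEnd ℂ) w ∈ ρa → (starRingEnd ℂ) w ∈ ρb →
      ∀ x : H, (Rb w x - Ra w x) + (Complex.I - w) • Ra Complex.I (Rb w x - Ra w x) ∈ 𝒩p := by
    intro w hwa hwb hwa' hwb' x
    apply (h𝒩p _).mpr
    intro f
    rw [inner_smul_left]
    exact weak_transfer hexta hsyma hRa hIa hcIa (hWD w hwa hwb hwa' hwb' x) f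
  -- the CLM star identity for family a at the point conj z
  have stara : Rb ((starRingEnd ℂ) z) - Ra ((starRingEnd ℂ) z) =
      ((1 : H →L[ℂ] H) + ((starRingEnd ℂ) z - Complex.I) • Ra ((starRingEnd ℂ) z)) ∘L
      ((𝒩p.subtypeL ∘L 𝒩p.orthogonalProjectionOnto) ∘L
        (((1 : H →L[ℂ] H) + (Complex.I - (starRingEnd ℂ) z) • Ra Complex.I) ∘L
          (Rb ((starRingEnd ℂ) z) - Ra ((starRingEnd ℂ) z)))) := by
    ext x
    simp only [ContinuousLinearMap.comp_apply, ContinuousLinearMap.sub_apply,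
      ContinuousLinearMap.add_apply, ContinuousLinearMap.one_apply,
      ContinuousLinearMap.smul_apply, Submodule.subtypeL_apply]
    set v : H := Rb ((starRingEnd ℂ) z) x - Ra ((starRingEnd ℂ) z) x with hv
    have hmem : v + (Complex.I - (starRingEnd ℂ) z) • Ra Complex.I v ∈ 𝒩p :=
      hmema ((starRingEnd ℂ) z) hcza hczb hccza hcczb x
    rw [show ((𝒩p.orthogonalProjectionOnto (v + (Complex.I - (starRingEnd ℂ) z) • Ra Complex.I v) : 𝒩p) : H) =
      v + (Complex.I - (starRingEnd ℂ) z) • Ra Complex.I v from Submodule.starProjection_eq_self_iff.mpr hmem]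
    exact (inv_pt hRa hcza hIa v).symm
  -- adjoints of resolvents
  have hadj_acz : ContinuousLinearMap.adjoint (Ra ((starRingEnd ℂ) z)) = Ra z := by
    have := resolvent_adjoint hsyma hRa hcza hccza
    rwa [Complex.conj_conj] at this
  have hadj_bcz : ContinuousLinearMap.adjoint (Rb ((starRingEnd ℂ) z)) = Rb z := by
    have := resolvent_adjoint hsymb hRb hczb hcczb
    rwa [Complex.conj_conj] at this
  have hadj_aI : ContinuousLinearMap.adjoint (Ra Complex.I) = Ra (-Complex.I) := by
    have := resolvent_adjoint hsyma hRa hIa hcIa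
    rwa [hcI] at this
  have adj_one : ContinuousLinearMap.adjoint (1 : H →L[ℂ] H) = 1 := by
    rw [ContinuousLinearMap.one_def, ContinuousLinearMap.adjoint_id]
  have hadjQ : ContinuousLinearMap.adjoint (𝒩p.subtypeL ∘L 𝒩p.orthogonalProjectionOnto) =
      𝒩p.subtypeL ∘L 𝒩p.orthogonalProjectionOnto := by
    rw [ContinuousLinearMap.adjoint_comp, Submodule.adjoint_subtypeL,
      Submodule.adjoint_orthogonalProjectionOnto]
  have hadjD : ContinuousLinearMap.adjoint
      (Rb ((starRingEnd ℂ) z) - Ra ((starRingEnd ℂ) z)) = Rb z - Ra z := by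
    rw [map_sub, hadj_acz, hadj_bcz]
  have hadjB : ContinuousLinearMap.adjoint
      ((1 : H →L[ℂ] H) + ((starRingEnd ℂ) z - Complex.I) • Ra ((starRingEnd ℂ) z)) =
      1 + (z + Complex.I) • Ra z := by
    rw [map_add, map_smulₛₗ, adj_one, hadj_acz]
    congr 1
    rw [map_sub, Complex.conj_conj, hcI, sub_neg_eq_add]
  have hadjC : ContinuousLinearMap.adjoint
      ((1 : H →L[ℂ] H) + (Complex.I - (starRingEnd ℂ) z) • Ra Complex.I) =
      1 + (-Complex.I - z) • Ra (-Complex.I) := by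
    rw [map_add, map_smulₛₗ, adj_one, hadj_aI]
    congr 1
    rw [map_sub, Complex.conj_conj, hcI]
  -- star-star: adjoint of stara
  have hstar2 : Rb z - Ra z =
      (((Rb z - Ra z) ∘L ((1 : H →L[ℂ] H) + (-Complex.I - z) • Ra (-Complex.I))) ∘L
        (𝒩p.subtypeL ∘L 𝒩p.orthogonalProjectionOnto)) ∘L
        ((1 : H →L[ℂ] H) + (z + Complex.I) • Ra z) := by
    have h := congrArg (ContinuousLinearMap.adjoint) stara
    rw [ContinuousLinearMap.adjoint_comp, ContinuousLinearMap.adjoint_comp,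
      ContinuousLinearMap.adjoint_comp, hadjD, hadjB, hadjC, hadjQ] at h
    exact h
  -- pointwise star identity for family b at z
  have hstarb_pt : ∀ x' : H, ∀ m : 𝒩p, (m : H) =
      (Rb z x' - Ra z x') + (Complex.I - z) • Rb Complex.I (Rb z x' - Ra z x') →
      Rb z x' - Ra z x' = (m : H) + (z - Complex.I) • Rb z (m : H) := by
    intro x' m hm
    have h := inv_pt hRb hzb hIb (Rb z x' - Ra z x')
    rw [← hm] at h
    exact h.symm
  -- middle collapse identities
  have e1 : ∀ y : H, Rb z y + (Complex.I - z) • Rb Complex.I (Rb z y) = Rb Complex.I y := by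
    intro y
    have h := resolvent_sub hRb hIb hzb y
    rw [sub_eq_iff_eq_add] at h
    rw [h]; abel
  have e2 : ∀ y : H, Ra z (y + (-Complex.I - z) • Ra (-Complex.I) y) = Ra (-Complex.I) y := by
    intro y
    have h := resolvent_sub hRa hza hnIa y
    rw [map_add, (Ra z).map_smul]
    have h2 : (-Complex.I - z) • Ra z (Ra (-Complex.I) y) =
        -((z - -Complex.I) • Ra z (Ra (-Complex.I) y)) := by
      rw [← neg_smul]; congr 1; ring
    rw [h2, ← h]
    abel
  -- now the final computation
  ext u
  simp only [ContinuousLinearMap.comp_apply, ContinuousLinearMap.mul_apply,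
    ContinuousLinearMap.sub_apply, ContinuousLinearMap.add_apply,
    ContinuousLinearMap.one_apply, ContinuousLinearMap.smul_apply, Submodule.subtypeL_apply]
  have hA := congrArg (fun (T : H →L[ℂ] H) => T (u : H)) hstar2
  simp only [ContinuousLinearMap.comp_apply, ContinuousLinearMap.sub_apply,
    ContinuousLinearMap.add_apply, ContinuousLinearMap.one_apply,
    ContinuousLinearMap.smul_apply, Submodule.subtypeL_apply] at hA
  have hproj1 : 𝒩p.orthogonalProjectionOnto ((u : H) + (z + Complex.I) • Ra z (u : H)) =
      u + (z + Complex.I) • 𝒩p.orthogonalProjectionOnto (Ra z (u : H)) := by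
    rw [map_add, 𝒩p.orthogonalProjectionOnto.map_smul,
      Submodule.orthogonalProjectionOnto_mem_subspace_eq_self]
  rw [hproj1] at hA
  set u₁ : 𝒩p := u + (z + Complex.I) • 𝒩p.orthogonalProjectionOnto (Ra z (u : H)) with hu₁
  set X : H := (u₁ : H) + (-Complex.I - z) • Ra (-Complex.I) (u₁ : H) with hX
  -- step C: middle collapse at X
  have hC : (Rb z X - Ra z X) + (Complex.I - z) • Rb Complex.I (Rb z X - Ra z X) =
      Rb Complex.I (u₁ : H) - Ra (-Complex.I) (u₁ : H) -
        ((2 : ℂ) * Complex.I) • Rb Complex.I (Ra (-Complex.I) (u₁ : H)) := by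
    have hb : Rb z X + (Complex.I - z) • Rb Complex.I (Rb z X) = Rb Complex.I X := e1 X
    have ha : Ra z X = Ra (-Complex.I) (u₁ : H) := by rw [hX]; exact e2 (u₁ : H)
    have hbX : Rb Complex.I X = Rb Complex.I (u₁ : H) +
        (-Complex.I - z) • Rb Complex.I (Ra (-Complex.I) (u₁ : H)) := by
      rw [hX, map_add, (Rb Complex.I).map_smul]
    calc (Rb z X - Ra z X) + (Complex.I - z) • Rb Complex.I (Rb z X - Ra z X)
        = (Rb z X + (Complex.I - z) • Rb Complex.I (Rb z X)) -
          (Ra z X + (Complex.I - z) • Rb Complex.I (Ra z X)) := by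
          rw [map_sub, smul_sub]; module
      _ = Rb Complex.I X - (Ra (-Complex.I) (u₁ : H) +
            (Complex.I - z) • Rb Complex.I (Ra (-Complex.I) (u₁ : H))) := by rw [hb, ha]
      _ = _ := by rw [hbX]; module
  -- step D: membership of the transferred vector at X
  have hmemX : (Rb z X - Ra z X) + (Complex.I - z) • Rb Complex.I (Rb z X - Ra z X) ∈ 𝒩p :=
    hmemb z hza hzb hcza hczb X
  -- the projected middle element
  have hA0 : Rb Complex.I (u₁ : H) - Ra (-Complex.I) (u₁ : H) -
      ((2 : ℂ) * Complex.I) • Rb Complex.I (Ra (-Complex.I) (u₁ : H)) =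
      ((⟨(Rb z X - Ra z X) + (Complex.I - z) • Rb Complex.I (Rb z X - Ra z X), hmemX⟩ :
        𝒩p) : H) := by
    rw [← hC]
  have hD := hstarb_pt X
    ⟨(Rb z X - Ra z X) + (Complex.I - z) • Rb Complex.I (Rb z X - Ra z X), hmemX⟩ rfl
  rw [hA, hD, hA0, Submodule.orthogonalProjectionOnto_mem_subspace_eq_self, map_add,
    𝒩p.orthogonalProjectionOnto.map_smul, Submodule.orthogonalProjectionOnto_mem_subspace_eq_self]

end Stmt5Aux


open Stmt5Aux

set_option maxHeartbeats 4000000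
set_option synthInstance.maxHeartbeats 1000000

/-- Theorem 3.3 of Gesztesy–Kalton–Makarov–Tsekanovskii; the linear
fractional transformation relating the Weyl–Titchmarsh operators of two self-adjoint
extensions `H₁, H₂` of `Ḣ`.  With `e^{-2iα} = -C_{H₂}C_{H₁}⁻¹|_{𝒩₊}` (the self-adjoint
operator `α = α_{1,2}` in `𝒩₊` being encoded through the unitary `U = e^{iα}`, so that
`cos α = (U+U*)/2`, `sin α = (U-U*)/(2i)`, `e^{-2iα} = (U*)²`), for every
`z ∈ ρ(H₁) ∩ ρ(H₂)`:
`M_{H₂,𝒩₊}(z) = e^{-iα}(cos α + sin α · M_{H₁,𝒩₊}(z))(sin α - cos α · M_{H₁,𝒩₊}(z))⁻¹ e^{iα}`. -/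
theorem statement5
    {H : Type*} [NormedAddCommGroup H] [InnerProductSpace ℂ H] [CompleteSpace H]
    [TopologicalSpace.SeparableSpace H]
    -- the densely defined closed symmetric operator Ḣ:
    (Hdot : H →ₗ.[ℂ] H) (hdense : Dense (Hdot.domain : Set H))
    (hsym : PMapSymmetric Hdot) (hclosed : IsClosed (Hdot.graph : Set (H × H)))
    -- the deficiency subspace 𝒩₊ = ker(Ḣ* - i):
    (𝒩p : Submodule ℂ H) [CompleteSpace 𝒩p]
    (h𝒩p : ∀ u : H, u ∈ 𝒩p ↔ ∀ f : Hdot.domain,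
      (inner ℂ u (Hdot f) : ℂ) = inner ℂ (Complex.I • u) (f : H))
    -- two self-adjoint extensions H₁, H₂ of Ḣ, with resolvents on ρ₁, ρ₂ ⊇ ℂ∖ℝ:
    (H₁ H₂ : H →ₗ.[ℂ] H) (hext₁ : Hdot ≤ H₁) (hext₂ : Hdot ≤ H₂)
    (hsym₁ : PMapSymmetric H₁) (hsym₂ : PMapSymmetric H₂)
    (ρ₁ ρ₂ : Set ℂ) (hρ₁ : {z : ℂ | z.im ≠ 0} ⊆ ρ₁) (hρ₂ : {z : ℂ | z.im ≠ 0} ⊆ ρ₂)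
    (R₁ R₂ : ℂ → H →L[ℂ] H)
    (hR₁ : IsResolventOn H₁ R₁ ρ₁) (hR₂ : IsResolventOn H₂ R₂ ρ₂)
    -- the unitary U = e^{iα_{1,2}} in 𝒩₊ with e^{-2iα_{1,2}} = -C_{H₂}C_{H₁}⁻¹|_{𝒩₊},
    -- where C_H = (H+i)(H-i)⁻¹ = I + 2i (H-i)⁻¹ and C_H⁻¹ = I - 2i (H+i)⁻¹:
    (U : 𝒩p →L[ℂ] 𝒩p)
    (hU : (adjoint U) * U = 1 ∧ U * (adjoint U) = 1)
    (hα : ∀ u : 𝒩p, ((adjoint U ((adjoint U) u)) : H) =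
      -((1 + (2 * Complex.I) • R₂ Complex.I)
        ((1 - (2 * Complex.I) • R₁ (-Complex.I)) (u : H))))
    -- the Weyl–Titchmarsh operators M_{Hℓ,𝒩₊}:
    (M₁ M₂ : ℂ → 𝒩p →L[ℂ] 𝒩p)
    (hM₁ : ∀ z : ℂ, M₁ z = z • (1 : 𝒩p →L[ℂ] 𝒩p) +
      ((1 : ℂ) + z ^ 2) • (𝒩p.orthogonalProjectionOnto.comp ((R₁ z).comp 𝒩p.subtypeL)))
    (hM₂ : ∀ z : ℂ, M₂ z = z • (1 : 𝒩p →L[ℂ] 𝒩p) +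
      ((1 : ℂ) + z ^ 2) • (𝒩p.orthogonalProjectionOnto.comp ((R₂ z).comp 𝒩p.subtypeL))) :
    ∀ z ∈ ρ₁ ∩ ρ₂,
      IsUnit (((2 : ℂ) * Complex.I)⁻¹ • (U - adjoint U) -
          ((2 : ℂ)⁻¹ • (U + adjoint U)) * M₁ z) ∧
      M₂ z = (adjoint U) *
          ((2 : ℂ)⁻¹ • (U + adjoint U) +
            (((2 : ℂ) * Complex.I)⁻¹ • (U - adjoint U)) * M₁ z) *
          Ring.inverse (((2 : ℂ) * Complex.I)⁻¹ • (U - adjoint U) -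
            ((2 : ℂ)⁻¹ • (U + adjoint U)) * M₁ z) * U := by
  intro z hz
  obtain ⟨hz1, hz2⟩ := hz
  have hI1 : Complex.I ∈ ρ₁ := hρ₁ (by simp)
  have hI2 : Complex.I ∈ ρ₂ := hρ₂ (by simp)
  have hnI1 : -Complex.I ∈ ρ₁ := hρ₁ (by simp)
  have hnI2 : -Complex.I ∈ ρ₂ := hρ₂ (by simp)
  have hI3 : Complex.I ^ 3 = -Complex.I := by
    rw [pow_succ, Complex.I_sq, neg_one_mul]
  have hI4 : Complex.I ^ 4 = 1 := by
    rw [pow_succ, hI3, neg_mul, Complex.I_mul_I, neg_neg]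
  set V := adjoint U with hVdef
  obtain ⟨hvu, huv⟩ := hU
  have hUV' : ∀ X : 𝒩p →L[ℂ] 𝒩p, U * (V * X) = X := by
    intro X; rw [← mul_assoc, huv, one_mul]
  have hVU' : ∀ X : 𝒩p →L[ℂ] 𝒩p, V * (U * X) = X := by
    intro X; rw [← mul_assoc, hvu, one_mul]
  have hVUpt : ∀ w : 𝒩p, V (U w) = w := by
    intro w
    have h := congrArg (fun T : 𝒩p →L[ℂ] 𝒩p => T w) hvu
    simpa using h
  -- Krein identities
  have k1 := krein Hdot 𝒩p h𝒩p H₁ H₂ hext₁ hext₂ hsym₁ hsym₂ ρ₁ ρ₂ hρ₁ hρ₂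
    R₁ R₂ hR₁ hR₂ hz1 hz2
  have k2 := krein Hdot 𝒩p h𝒩p H₂ H₁ hext₂ hext₁ hsym₂ hsym₁ ρ₂ ρ₁ hρ₂ hρ₁
    R₂ R₁ hR₂ hR₁ hz2 hz1
  -- middle operator of k1 via hα
  have hK1 : 𝒩p.orthogonalProjectionOnto.comp ((R₂ Complex.I - R₁ (-Complex.I) -
      ((2 : ℂ) * Complex.I) • ((R₂ Complex.I).comp (R₁ (-Complex.I)))).comp 𝒩p.subtypeL) =
      (Complex.I/2) • (V * V + 1) := by
    ext u
    have h := hα u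
    simp only [ContinuousLinearMap.add_apply, ContinuousLinearMap.sub_apply,
      ContinuousLinearMap.smul_apply, ContinuousLinearMap.one_apply] at h
    rw [map_sub, (R₂ Complex.I).map_smul] at h
    simp only [ContinuousLinearMap.comp_apply, ContinuousLinearMap.sub_apply,
      ContinuousLinearMap.smul_apply, Submodule.subtypeL_apply, ContinuousLinearMap.mul_apply,
      ContinuousLinearMap.add_apply, ContinuousLinearMap.one_apply]
    have hvec : R₂ Complex.I (u : H) - R₁ (-Complex.I) (u : H) -
        ((2 : ℂ) * Complex.I) • R₂ Complex.I (R₁ (-Complex.I) (u : H)) =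
        (((Complex.I/2) • (V (V u) + u) : 𝒩p) : H) := by
      rw [Submodule.coe_smul, Submodule.coe_add, h]
      match_scalars <;> (field_simp; try ring_nf) <;> (try simp [Complex.I_sq, hI3, hI4]) <;> try ring
    rw [hvec, Submodule.orthogonalProjectionOnto_mem_subspace_eq_self]
  -- the swapped version of hα
  have hα' : ∀ u : 𝒩p, ((U (U u)) : H) =
      -((1 + (2 * Complex.I) • R₁ Complex.I)
        ((1 - (2 * Complex.I) • R₂ (-Complex.I)) (u : H))) := by
    intro u
    have h := hα (U (U u))
    simp only [hVUpt] at h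
    simp only [ContinuousLinearMap.add_apply, ContinuousLinearMap.sub_apply,
      ContinuousLinearMap.smul_apply, ContinuousLinearMap.one_apply] at h
    have s1 : Complex.I - -Complex.I = 2 * Complex.I := by ring
    have s2 : -Complex.I - Complex.I = -(2 * Complex.I) := by ring
    set g : H := ((U (U u)) : H) with hgdef
    set y : H := g - (2 * Complex.I) • R₁ (-Complex.I) g with hydef
    -- h : ↑u = -(y + (2I) • R₂ I y)
    have h' : y + (2 * Complex.I) • R₂ Complex.I y = -(u : H) := by
      rw [h, neg_neg]
    have hb := inv_pt hR₂ hnI2 hI2 y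
    rw [s1, s2] at hb
    rw [h'] at hb
    -- hb : -(u:H) + (-(2I)) • R₂ (-I) (-(u:H)) = y
    have hbclean : y = -(u : H) + (2 * Complex.I) • R₂ (-Complex.I) (u : H) := by
      rw [← hb, map_neg, smul_neg, neg_smul, neg_neg]
    have ha := inv_pt hR₁ hI1 hnI1 g
    rw [s1, s2] at ha
    have hysub : g + (-(2 * Complex.I)) • R₁ (-Complex.I) g = y := by
      rw [hydef, neg_smul, ← sub_eq_add_neg]
    rw [hysub] at ha
    -- ha : y + (2I) • R₁ I y = g
    simp only [ContinuousLinearMap.add_apply, ContinuousLinearMap.sub_apply,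
      ContinuousLinearMap.smul_apply, ContinuousLinearMap.one_apply]
    have final : y + (2 * Complex.I) • R₁ Complex.I y =
        -(((u : H) - (2 * Complex.I) • R₂ (-Complex.I) (u : H)) + (2 * Complex.I) •
          R₁ Complex.I ((u : H) - (2 * Complex.I) • R₂ (-Complex.I) (u : H))) := by
      rw [hbclean]
      simp only [map_add, map_sub, map_neg, ContinuousLinearMap.map_smul, smul_neg, smul_add,
        smul_sub, neg_add, neg_neg, neg_sub]
      match_scalars <;> (field_simp; try ring_nf) <;> (try simp [Complex.I_sq, hI3, hI4]) <;> try ring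
    exact ha.symm.trans final
  -- middle operator of k2 via hα'
  have hK2 : 𝒩p.orthogonalProjectionOnto.comp ((R₁ Complex.I - R₂ (-Complex.I) -
      ((2 : ℂ) * Complex.I) • ((R₁ Complex.I).comp (R₂ (-Complex.I)))).comp 𝒩p.subtypeL) =
      (Complex.I/2) • (U * U + 1) := by
    ext u
    have h := hα' u
    simp only [ContinuousLinearMap.add_apply, ContinuousLinearMap.sub_apply,
      ContinuousLinearMap.smul_apply, ContinuousLinearMap.one_apply] at h
    rw [map_sub, (R₁ Complex.I).map_smul] at h
    simp only [ContinuousLinearMap.comp_apply, ContinuousLinearMap.sub_apply,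
      ContinuousLinearMap.smul_apply, Submodule.subtypeL_apply, ContinuousLinearMap.mul_apply,
      ContinuousLinearMap.add_apply, ContinuousLinearMap.one_apply]
    have hvec : R₁ Complex.I (u : H) - R₂ (-Complex.I) (u : H) -
        ((2 : ℂ) * Complex.I) • R₁ Complex.I (R₂ (-Complex.I) (u : H)) =
        (((Complex.I/2) • (U (U u) + u) : 𝒩p) : H) := by
      rw [Submodule.coe_smul, Submodule.coe_add, h]
      match_scalars <;> (field_simp; try ring_nf) <;> (try simp [Complex.I_sq, hI3, hI4]) <;> try ring
    rw [hvec, Submodule.orthogonalProjectionOnto_mem_subspace_eq_self]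
  -- split the compressed difference
  have hsplit1 : 𝒩p.orthogonalProjectionOnto.comp ((R₂ z - R₁ z).comp 𝒩p.subtypeL) =
      𝒩p.orthogonalProjectionOnto.comp ((R₂ z).comp 𝒩p.subtypeL) -
      𝒩p.orthogonalProjectionOnto.comp ((R₁ z).comp 𝒩p.subtypeL) := by
    ext u
    simp only [ContinuousLinearMap.comp_apply, ContinuousLinearMap.sub_apply, map_sub]
  have hsplit2 : 𝒩p.orthogonalProjectionOnto.comp ((R₁ z - R₂ z).comp 𝒩p.subtypeL) =
      𝒩p.orthogonalProjectionOnto.comp ((R₁ z).comp 𝒩p.subtypeL) -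
      𝒩p.orthogonalProjectionOnto.comp ((R₂ z).comp 𝒩p.subtypeL) := by
    ext u
    simp only [ContinuousLinearMap.comp_apply, ContinuousLinearMap.sub_apply, map_sub]
  rw [hsplit1, hK1] at k1
  rw [hsplit2, hK2] at k2
  have hIz : ((1 : ℂ) + z ^ 2) = (z + Complex.I) * (z - Complex.I) := by
    ring_nf
    rw [Complex.I_sq]
    ring
  have hsmulprod : ∀ (a b : ℂ) (Xx Kk Yy : 𝒩p →L[ℂ] 𝒩p),
      (a * b) • (Xx * Kk * Yy) = (a • Xx) * Kk * (b • Yy) := by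
    intro a b Xx Kk Yy
    rw [smul_mul_assoc, smul_mul_assoc, mul_smul_comm, smul_smul]
  -- d1
  have d1 : M₂ z - M₁ z = (M₂ z + Complex.I • 1) * ((Complex.I/2) • (V * V + 1)) *
      (M₁ z - Complex.I • 1) := by
    rw [hM₁ z, hM₂ z]
    have hf2 : (z + Complex.I) • ((1 : 𝒩p →L[ℂ] 𝒩p) + (z - Complex.I) •
        (𝒩p.orthogonalProjectionOnto.comp ((R₂ z).comp 𝒩p.subtypeL))) =
        z • (1 : 𝒩p →L[ℂ] 𝒩p) + ((1 : ℂ) + z ^ 2) •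
        (𝒩p.orthogonalProjectionOnto.comp ((R₂ z).comp 𝒩p.subtypeL)) + Complex.I • 1 := by
      match_scalars <;> (field_simp; try ring_nf) <;> (try simp [Complex.I_sq, hI3, hI4]) <;> try ring
    have hf1 : (z - Complex.I) • ((1 : 𝒩p →L[ℂ] 𝒩p) + (z + Complex.I) •
        (𝒩p.orthogonalProjectionOnto.comp ((R₁ z).comp 𝒩p.subtypeL))) =
        z • (1 : 𝒩p →L[ℂ] 𝒩p) + ((1 : ℂ) + z ^ 2) •
        (𝒩p.orthogonalProjectionOnto.comp ((R₁ z).comp 𝒩p.subtypeL)) - Complex.I • 1 := by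
      match_scalars <;> (field_simp; try ring_nf) <;> (try simp [Complex.I_sq, hI3, hI4]) <;> try ring
    calc z • (1 : 𝒩p →L[ℂ] 𝒩p) + ((1 : ℂ) + z ^ 2) •
          (𝒩p.orthogonalProjectionOnto.comp ((R₂ z).comp 𝒩p.subtypeL)) -
          (z • (1 : 𝒩p →L[ℂ] 𝒩p) + ((1 : ℂ) + z ^ 2) •
          (𝒩p.orthogonalProjectionOnto.comp ((R₁ z).comp 𝒩p.subtypeL)))
        = ((1 : ℂ) + z ^ 2) • (𝒩p.orthogonalProjectionOnto.comp ((R₂ z).comp 𝒩p.subtypeL) -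
            𝒩p.orthogonalProjectionOnto.comp ((R₁ z).comp 𝒩p.subtypeL)) := by
          match_scalars <;> (field_simp; try ring_nf) <;> (try simp [Complex.I_sq, hI3, hI4]) <;> try ring
      _ = ((1 : ℂ) + z ^ 2) • (((1 : 𝒩p →L[ℂ] 𝒩p) + (z - Complex.I) •
            (𝒩p.orthogonalProjectionOnto.comp ((R₂ z).comp 𝒩p.subtypeL))) *
            ((Complex.I/2) • (V * V + 1)) *
            ((1 : 𝒩p →L[ℂ] 𝒩p) + (z + Complex.I) •
            (𝒩p.orthogonalProjectionOnto.comp ((R₁ z).comp 𝒩p.subtypeL)))) := by rw [k1]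
      _ = ((z + Complex.I) * (z - Complex.I)) • (((1 : 𝒩p →L[ℂ] 𝒩p) + (z - Complex.I) •
            (𝒩p.orthogonalProjectionOnto.comp ((R₂ z).comp 𝒩p.subtypeL))) *
            ((Complex.I/2) • (V * V + 1)) *
            ((1 : 𝒩p →L[ℂ] 𝒩p) + (z + Complex.I) •
            (𝒩p.orthogonalProjectionOnto.comp ((R₁ z).comp 𝒩p.subtypeL)))) := by rw [← hIz]
      _ = _ := by
          rw [hsmulprod, hf2, hf1]
  -- d2
  have d2 : M₁ z - M₂ z = (M₁ z + Complex.I • 1) * ((Complex.I/2) • (U * U + 1)) *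
      (M₂ z - Complex.I • 1) := by
    rw [hM₁ z, hM₂ z]
    have hf2 : (z + Complex.I) • ((1 : 𝒩p →L[ℂ] 𝒩p) + (z - Complex.I) •
        (𝒩p.orthogonalProjectionOnto.comp ((R₁ z).comp 𝒩p.subtypeL))) =
        z • (1 : 𝒩p →L[ℂ] 𝒩p) + ((1 : ℂ) + z ^ 2) •
        (𝒩p.orthogonalProjectionOnto.comp ((R₁ z).comp 𝒩p.subtypeL)) + Complex.I • 1 := by
      match_scalars <;> (field_simp; try ring_nf) <;> (try simp [Complex.I_sq, hI3, hI4]) <;> try ring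
    have hf1 : (z - Complex.I) • ((1 : 𝒩p →L[ℂ] 𝒩p) + (z + Complex.I) •
        (𝒩p.orthogonalProjectionOnto.comp ((R₂ z).comp 𝒩p.subtypeL))) =
        z • (1 : 𝒩p →L[ℂ] 𝒩p) + ((1 : ℂ) + z ^ 2) •
        (𝒩p.orthogonalProjectionOnto.comp ((R₂ z).comp 𝒩p.subtypeL)) - Complex.I • 1 := by
      match_scalars <;> (field_simp; try ring_nf) <;> (try simp [Complex.I_sq, hI3, hI4]) <;> try ring
    calc z • (1 : 𝒩p →L[ℂ] 𝒩p) + ((1 : ℂ) + z ^ 2) •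
          (𝒩p.orthogonalProjectionOnto.comp ((R₁ z).comp 𝒩p.subtypeL)) -
          (z • (1 : 𝒩p →L[ℂ] 𝒩p) + ((1 : ℂ) + z ^ 2) •
          (𝒩p.orthogonalProjectionOnto.comp ((R₂ z).comp 𝒩p.subtypeL)))
        = ((1 : ℂ) + z ^ 2) • (𝒩p.orthogonalProjectionOnto.comp ((R₁ z).comp 𝒩p.subtypeL) -
            𝒩p.orthogonalProjectionOnto.comp ((R₂ z).comp 𝒩p.subtypeL)) := by
          match_scalars <;> (field_simp; try ring_nf) <;> (try simp [Complex.I_sq, hI3, hI4]) <;> try ring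
      _ = ((1 : ℂ) + z ^ 2) • (((1 : 𝒩p →L[ℂ] 𝒩p) + (z - Complex.I) •
            (𝒩p.orthogonalProjectionOnto.comp ((R₁ z).comp 𝒩p.subtypeL))) *
            ((Complex.I/2) • (U * U + 1)) *
            ((1 : 𝒩p →L[ℂ] 𝒩p) + (z + Complex.I) •
            (𝒩p.orthogonalProjectionOnto.comp ((R₂ z).comp 𝒩p.subtypeL)))) := by rw [k2]
      _ = ((z + Complex.I) * (z - Complex.I)) • (((1 : 𝒩p →L[ℂ] 𝒩p) + (z - Complex.I) •
            (𝒩p.orthogonalProjectionOnto.comp ((R₁ z).comp 𝒩p.subtypeL))) *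
            ((Complex.I/2) • (U * U + 1)) *
            ((1 : 𝒩p →L[ℂ] 𝒩p) + (z + Complex.I) •
            (𝒩p.orthogonalProjectionOnto.comp ((R₂ z).comp 𝒩p.subtypeL)))) := by rw [← hIz]
      _ = _ := by
          rw [hsmulprod, hf2, hf1]
  -- the linear fractional relation
  have F1 : M₂ z * (V * (((2 : ℂ) * Complex.I)⁻¹ • (U - V) - ((2 : ℂ)⁻¹ • (U + V)) * M₁ z)) =
      V * ((2 : ℂ)⁻¹ • (U + V) + (((2 : ℂ) * Complex.I)⁻¹ • (U - V)) * M₁ z) := by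
    have hdiff : M₂ z * (V * (((2 : ℂ) * Complex.I)⁻¹ • (U - V) -
        ((2 : ℂ)⁻¹ • (U + V)) * M₁ z)) -
        V * ((2 : ℂ)⁻¹ • (U + V) + (((2 : ℂ) * Complex.I)⁻¹ • (U - V)) * M₁ z) =
        (-Complex.I) • ((M₂ z - M₁ z) - (M₂ z + Complex.I • 1) *
          ((Complex.I/2) • (V * V + 1)) * (M₁ z - Complex.I • 1)) := by
      simp only [mul_add, add_mul, mul_sub, sub_mul, smul_mul_assoc, mul_smul_comm, mul_assoc,
        smul_smul, smul_add, smul_sub, mul_one, one_mul, hvu, huv, hUV', hVU']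
      match_scalars <;> (field_simp; try ring_nf) <;> (try simp [Complex.I_sq, hI3, hI4]) <;> try ring
    rw [d1, sub_self, smul_zero] at hdiff
    exact sub_eq_zero.mp hdiff
  have F2 : M₁ z * (U * (((2 : ℂ) * Complex.I)⁻¹ • (U - V) + ((2 : ℂ)⁻¹ • (U + V)) * M₂ z)) =
      U * ((((2 : ℂ) * Complex.I)⁻¹ • (U - V)) * M₂ z - (2 : ℂ)⁻¹ • (U + V)) := by
    have hdiff : M₁ z * (U * (((2 : ℂ) * Complex.I)⁻¹ • (U - V) +
        ((2 : ℂ)⁻¹ • (U + V)) * M₂ z)) -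
        U * ((((2 : ℂ) * Complex.I)⁻¹ • (U - V)) * M₂ z - (2 : ℂ)⁻¹ • (U + V)) =
        Complex.I • ((M₁ z - M₂ z) - (M₁ z + Complex.I • 1) *
          ((Complex.I/2) • (U * U + 1)) * (M₂ z - Complex.I • 1)) := by
      simp only [mul_add, add_mul, mul_sub, sub_mul, smul_mul_assoc, mul_smul_comm, mul_assoc,
        smul_smul, smul_add, smul_sub, mul_one, one_mul, hvu, huv, hUV', hVU']
      match_scalars <;> (field_simp; try ring_nf) <;> (try simp [Complex.I_sq, hI3, hI4]) <;> try ring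
    rw [d2, sub_self, smul_zero] at hdiff
    exact sub_eq_zero.mp hdiff
  -- F3 : B * S = 1
  have i3 : (((2 : ℂ) * Complex.I)⁻¹ • (U - V) + ((2 : ℂ)⁻¹ • (U + V)) * (U * (M₂ z * V))) *
      (((2 : ℂ) * Complex.I)⁻¹ • (U - V) - ((2 : ℂ)⁻¹ • (U + V)) * M₁ z) =
      (((2 : ℂ) * Complex.I)⁻¹ • (U - V)) * (((2 : ℂ) * Complex.I)⁻¹ • (U - V) -
        ((2 : ℂ)⁻¹ • (U + V)) * M₁ z) +
      ((2 : ℂ)⁻¹ • (U + V)) * (U * (M₂ z * (V * (((2 : ℂ) * Complex.I)⁻¹ • (U - V) -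
        ((2 : ℂ)⁻¹ • (U + V)) * M₁ z)))) := by
    simp only [mul_add, add_mul, mul_sub, sub_mul, smul_mul_assoc, mul_smul_comm, mul_assoc,
      smul_smul, smul_add, smul_sub, mul_one, one_mul, hvu, huv, hUV', hVU']
    match_scalars <;> (field_simp; try ring_nf) <;> (try simp [Complex.I_sq, hI3, hI4]) <;> try ring
  rw [F1] at i3
  have i4 : (((2 : ℂ) * Complex.I)⁻¹ • (U - V)) * (((2 : ℂ) * Complex.I)⁻¹ • (U - V) -
        ((2 : ℂ)⁻¹ • (U + V)) * M₁ z) +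
      ((2 : ℂ)⁻¹ • (U + V)) * (U * (V * ((2 : ℂ)⁻¹ • (U + V) +
        (((2 : ℂ) * Complex.I)⁻¹ • (U - V)) * M₁ z))) = 1 := by
    simp only [mul_add, add_mul, mul_sub, sub_mul, smul_mul_assoc, mul_smul_comm, mul_assoc,
      smul_smul, smul_add, smul_sub, mul_one, one_mul, hvu, huv, hUV', hVU']
    match_scalars <;> (field_simp; try ring_nf) <;> (try simp [Complex.I_sq, hI3, hI4]) <;> try ring
  have F3 := i3.trans i4
  -- F4 : S * B = 1
  have i5 : (((2 : ℂ) * Complex.I)⁻¹ • (U - V) - ((2 : ℂ)⁻¹ • (U + V)) * M₁ z) *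
      (((2 : ℂ) * Complex.I)⁻¹ • (U - V) + ((2 : ℂ)⁻¹ • (U + V)) * (U * (M₂ z * V))) =
      U * ((((2 : ℂ) * Complex.I)⁻¹ • (U - V)) * (((2 : ℂ) * Complex.I)⁻¹ • (U - V) +
          ((2 : ℂ)⁻¹ • (U + V)) * M₂ z) -
        ((2 : ℂ)⁻¹ • (U + V)) * (V * (M₁ z * (U * (((2 : ℂ) * Complex.I)⁻¹ • (U - V) +
          ((2 : ℂ)⁻¹ • (U + V)) * M₂ z))))) * V := by
    simp only [mul_add, add_mul, mul_sub, sub_mul, smul_mul_assoc, mul_smul_comm, mul_assoc,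
      smul_smul, smul_add, smul_sub, mul_one, one_mul, hvu, huv, hUV', hVU']
    match_scalars <;> (field_simp; try ring_nf) <;> (try simp [Complex.I_sq, hI3, hI4]) <;> try ring
  rw [F2] at i5
  have i6 : (((2 : ℂ) * Complex.I)⁻¹ • (U - V)) * (((2 : ℂ) * Complex.I)⁻¹ • (U - V) +
        ((2 : ℂ)⁻¹ • (U + V)) * M₂ z) -
      ((2 : ℂ)⁻¹ • (U + V)) * (V * (U * ((((2 : ℂ) * Complex.I)⁻¹ • (U - V)) * M₂ z -
        (2 : ℂ)⁻¹ • (U + V)))) = 1 := by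
    simp only [mul_add, add_mul, mul_sub, sub_mul, smul_mul_assoc, mul_smul_comm, mul_assoc,
      smul_smul, smul_add, smul_sub, mul_one, one_mul, hvu, huv, hUV', hVU']
    match_scalars <;> (field_simp; try ring_nf) <;> (try simp [Complex.I_sq, hI3, hI4]) <;> try ring
  rw [i6, mul_one, huv] at i5
  have F4 := i5
  -- conclude
  set S : 𝒩p →L[ℂ] 𝒩p := ((2 : ℂ) * Complex.I)⁻¹ • (U - V) - ((2 : ℂ)⁻¹ • (U + V)) * M₁ z
    with hSdef
  set B : 𝒩p →L[ℂ] 𝒩p := ((2 : ℂ) * Complex.I)⁻¹ • (U - V) +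
    ((2 : ℂ)⁻¹ • (U + V)) * (U * (M₂ z * V)) with hBdef
  refine ⟨⟨⟨S, B, F4, F3⟩, rfl⟩, ?_⟩
  have hrinv : Ring.inverse S = B := by
    have : Ring.inverse ((⟨S, B, F4, F3⟩ : (𝒩p →L[ℂ] 𝒩p)ˣ) : 𝒩p →L[ℂ] 𝒩p) = B :=
      Ring.inverse_unit _
    exact this
  rw [hrinv, ← F1, mul_assoc (M₂ z) (V * S) B, mul_assoc V S B, F4, mul_one,
    mul_assoc (M₂ z) V U, hvu, mul_one]
end

section
/- Let ω be a Borel measure on ℝ with ∫_ℝ (1+λ²)^{-1} dω(λ) = 1 and ω(ℝ) = ∞. Let Ĥ be the self-adjoint multiplication operator (Ĥf)(λ) = λf(λ) in L²(ℝ; dω) with dom(Ĥ) = L²(ℝ; (1+λ²)dω), and let Ḣ̂ = Ĥ|_{dom(Ḣ̂)} with dom(Ḣ̂) = {f ∈ dom(Ĥ) : ∫_ℝ f dω = 0}. Then Ḣ̂ is a densely defined, closed, symmetric operator in L²(ℝ; dω) with deficiency indices (1,1), and for every z ∈ ℂ∖ℝ, ker(Ḣ̂* − z) = { c·(λ−z)^{-1}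 : c ∈ ℂ }. -/
/-!
For nonreal `z`, multiplication by `(λ - z)⁻¹` is a bounded operator `R_z` on `L²(ω)`, and
`(λ - z)⁻¹` itself lies in `L²(ω)` because `|λ - i|⁻² = (1 + λ²)⁻¹` and
`(λ - z)⁻¹ = (λ - i)⁻¹ + (z - i) R_z (λ - i)⁻¹`. For `f` with `λ f ∈ L²(ω)`,
`∫ f dω = ⟪(λ - z)⁻¹, (λ - z̄) f⟫`. Hence `R_{z̄} g ∈ dom Ḣ̂` exactly when `g ⊥ (λ - z)⁻¹`, and then
`(Ḣ̂ - z̄) R_{z̄} g = g`: the range of `Ḣ̂ - z̄` is `{(λ - z)⁻¹}ᗮ`, so `ker(Ḣ̂* - z) = ℂ (λ - z)⁻¹`.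
If `h ⊥ dom Ḣ̂`, the same computation puts `R_z h` in `ℂ (λ - z)⁻¹`, so `h` is a constant in
`L²(ω)`, which vanishes because `ω(ℝ) = ∞`. The graph of `Ḣ̂` is closed because it is cut out by
the continuous conditions `R_i y = x + i R_i x` (that is, `y = λ x`) and `⟪(λ - i)⁻¹, y + i x⟫ = 0`.
-/

open MeasureTheory

/-- The deficiency subspace `ker(T* - c)` of a densely defined symmetric operator `T`. -/
def defSpace {H : Type*} [NormedAddCommGroup H] [InnerProductSpace ℂ H]
    (T : H →ₗ.[ℂ] H) (c : ℂ) : Submodule ℂ H where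
  carrier := {u | ∀ f : T.domain, (inner ℂ u (T f) : ℂ) = inner ℂ (c • u) (f : H)}
  zero_mem' := by intro f; simp
  add_mem' := by
    intro a b ha hb f
    simp only [smul_add, inner_add_left, ha f, hb f]
  smul_mem' := by
    intro r u hu f
    have h := hu f
    simp only [inner_smul_left, h, smul_comm r]
    ring

open Filter Complex ComplexConjugate
open scoped InnerProductSpace

lemma mem_span_singleton_of_forall_inner_eq_zero {𝕜 E : Type*} [RCLike 𝕜]
    [NormedAddCommGroup E] [InnerProductSpace 𝕜 E] {v u : E}
    (h : ∀ g, ⟪v, g⟫_𝕜 = 0 → ⟪u, g⟫_𝕜 = 0) : u ∈ 𝕜 ∙ v := by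
  rw [← Submodule.orthogonal_orthogonal (𝕜 ∙ v), Submodule.mem_orthogonal']
  intro g hg
  exact h g (Submodule.mem_orthogonal_singleton_iff_inner_right.mp hg)

namespace MulByCoordinate

variable {ω : Measure ℝ} {w z : ℂ} {T : Lp ℂ 2 ω →ₗ.[ℂ] Lp ℂ 2 ω}

lemma im_conj_ne_zero (hw : w.im ≠ 0) : (conj w).im ≠ 0 := by
  simpa using hw

lemma ofReal_sub_ne_zero (hw : w.im ≠ 0) (l : ℝ) : (l : ℂ) - w ≠ 0 :=
  fun h => hw (by simpa using congrArg Complex.im h)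

lemma norm_inv_ofReal_sub_le (hw : w.im ≠ 0) (l : ℝ) : ‖((l : ℂ) - w)⁻¹‖ ≤ |w.im|⁻¹ := by
  rw [norm_inv]
  refine inv_anti₀ (abs_pos.mpr hw) ?_
  simpa using Complex.abs_im_le_norm ((l : ℂ) - w)

lemma memLp_top_inv_ofReal_sub (hw : w.im ≠ 0) : MemLp (fun l : ℝ => ((l : ℂ) - w)⁻¹) ⊤ ω :=
  memLp_top_of_bound
    ((continuous_ofReal.sub continuous_const).inv₀ (ofReal_sub_ne_zero hw)).aestronglyMeasurable
    _ (ae_of_all _ (norm_inv_ofReal_sub_le hw))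

lemma memLp_inv_ofReal_sub_I (hφ : Integrable (fun l : ℝ => (1 + l ^ 2)⁻¹) ω) :
    MemLp (fun l : ℝ => ((l : ℂ) - I)⁻¹) 2 ω := by
  refine (memLp_two_iff_integrable_sq_norm (memLp_top_inv_ofReal_sub (by simp)).1).mpr
    (hφ.congr (ae_of_all _ fun l => ?_))
  simp [norm_inv, Complex.sq_norm, Complex.normSq_apply]
  ring

lemma memLp_inv_ofReal_sub (hφ : Integrable (fun l : ℝ => (1 + l ^ 2)⁻¹) ω) (hw : w.im ≠ 0) :
    MemLp (fun l : ℝ => ((l : ℂ) - w)⁻¹) 2 ω := by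
  have hI := memLp_inv_ofReal_sub_I hφ
  have resolvent_identity : (fun l : ℝ => ((l : ℂ) - w)⁻¹) =
      fun l : ℝ => ((l : ℂ) - I)⁻¹ + (w - I) * (((l : ℂ) - w)⁻¹ * ((l : ℂ) - I)⁻¹) := by
    funext l
    have := ofReal_sub_ne_zero hw l
    have := ofReal_sub_ne_zero (w := I) (by simp) l
    field_simp
    ring
  rw [resolvent_identity]
  exact hI.add ((hI.mul' (memLp_top_inv_ofReal_sub hw)).const_mul _)

noncomputable def invSub (hφ : Integrable (fun l : ℝ => (1 + l ^ 2)⁻¹) ω) (hw : w.im ≠ 0) :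
    Lp ℂ 2 ω :=
  (memLp_inv_ofReal_sub hφ hw).toLp _

lemma coeFn_invSub (hφ : Integrable (fun l : ℝ => (1 + l ^ 2)⁻¹) ω) (hw : w.im ≠ 0) :
    invSub hφ hw =ᵐ[ω] fun l : ℝ => ((l : ℂ) - w)⁻¹ :=
  MemLp.coeFn_toLp _

noncomputable def mulInvSub (hw : w.im ≠ 0) : Lp ℂ 2 ω →L[ℂ] Lp ℂ 2 ω :=
  (ContinuousLinearMap.mul ℂ ℂ).holderL ω ⊤ 2 2 ((memLp_top_inv_ofReal_sub hw).toLp _)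

lemma coeFn_mulInvSub (hw : w.im ≠ 0) (g : Lp ℂ 2 ω) :
    mulInvSub hw g =ᵐ[ω] fun l : ℝ => ((l : ℂ) - w)⁻¹ * g l := by
  filter_upwards [ContinuousLinearMap.coeFn_holder (r := 2) (ContinuousLinearMap.mul ℂ ℂ)
    ((memLp_top_inv_ofReal_sub (ω := ω) hw).toLp _) g,
    (memLp_top_inv_ofReal_sub (ω := ω) hw).coeFn_toLp] with l h1 h2
  rw [mulInvSub, ContinuousLinearMap.holderL_apply_apply, h1, h2]
  rfl

lemma ae_eq_id_mul_iff (hw : w.im ≠ 0) {x y : Lp ℂ 2 ω} :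
    ((y : ℝ → ℂ) =ᵐ[ω] fun l : ℝ => (l : ℂ) * x l) ↔
      mulInvSub hw y = x + w • mulInvSub hw x := by
  rw [Lp.ext_iff]
  refine eventually_congr ?_
  filter_upwards [coeFn_mulInvSub hw y, coeFn_mulInvSub hw x,
    Lp.coeFn_add x (w • mulInvSub hw x), Lp.coeFn_smul w (mulInvSub hw x)] with l hy hx hadd hsmul
  have hne := ofReal_sub_ne_zero hw l
  rw [hy, hadd, Pi.add_apply, hsmul, Pi.smul_apply, hx, smul_eq_mul, inv_mul_eq_iff_eq_mul₀ hne]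
  constructor <;> intro h <;> rw [h] <;> field_simp <;> ring

lemma id_mul_mulInvSub (hw : w.im ≠ 0) (g : Lp ℂ 2 ω) :
    ((g + w • mulInvSub hw g : Lp ℂ 2 ω) : ℝ → ℂ) =ᵐ[ω]
      fun l : ℝ => (l : ℂ) * mulInvSub hw g l :=
  (ae_eq_id_mul_iff hw).mpr (by rw [map_add, map_smul])

lemma integral_eq_inner_invSub (hφ : Integrable (fun l : ℝ => (1 + l ^ 2)⁻¹) ω)
    (hw : w.im ≠ 0) {x y : Lp ℂ 2 ω} (hxy : (y : ℝ → ℂ) =ᵐ[ω] fun l : ℝ => (l : ℂ) * x l) :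
    ∫ l, x l ∂ω = ⟪invSub hφ hw, y - conj w • x⟫_ℂ := by
  rw [L2.inner_def]
  refine integral_congr_ae ?_
  filter_upwards [coeFn_invSub hφ hw, hxy, Lp.coeFn_sub y (conj w • x),
    Lp.coeFn_smul (conj w) x] with l hG hy hsub hsmul
  have hne := ofReal_sub_ne_zero (im_conj_ne_zero hw) l
  rw [RCLike.inner_apply', hG, hsub, Pi.sub_apply, hy, hsmul, Pi.smul_apply, smul_eq_mul,
    map_inv₀, map_sub, conj_ofReal]
  field_simp

lemma inner_mulInvSub_conj (hw : w.im ≠ 0) (h g : Lp ℂ 2 ω) :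
    ⟪h, mulInvSub (im_conj_ne_zero hw) g⟫_ℂ = ⟪mulInvSub hw h, g⟫_ℂ := by
  rw [L2.inner_def, L2.inner_def]
  refine integral_congr_ae ?_
  filter_upwards [coeFn_mulInvSub (im_conj_ne_zero hw) g, coeFn_mulInvSub hw h] with l hg hh
  rw [RCLike.inner_apply', RCLike.inner_apply', hg, hh, map_mul, map_inv₀, map_sub, conj_ofReal]
  ring

lemma pMapSymmetric_of_ae_eq_id_mul
    (hT : ∀ f : T.domain, (T f : ℝ → ℂ) =ᵐ[ω] fun l : ℝ => (l : ℂ) * (f : Lp ℂ 2 ω) l) :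
    PMapSymmetric T := by
  intro u v
  rw [L2.inner_def, L2.inner_def]
  refine integral_congr_ae ?_
  filter_upwards [hT u, hT v] with l hu hv
  rw [RCLike.inner_apply', RCLike.inner_apply', hu, hv, map_mul, conj_ofReal]
  ring

structure IsMeanZeroCoordMul (T : Lp ℂ 2 ω →ₗ.[ℂ] Lp ℂ 2 ω) : Prop where
  mem_domain_iff : ∀ f : Lp ℂ 2 ω, f ∈ T.domain ↔
    MemLp (fun l : ℝ => (l : ℂ) * f l) 2 ω ∧ ∫ l, f l ∂ω = 0
  ae_eq_id_mul : ∀ f : T.domain, (T f : ℝ → ℂ) =ᵐ[ω] fun l : ℝ => (l : ℂ) * (f : Lp ℂ 2 ω) l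

namespace IsMeanZeroCoordMul

lemma mulInvSub_mem_domain (hT : IsMeanZeroCoordMul T)
    (hφ : Integrable (fun l : ℝ => (1 + l ^ 2)⁻¹) ω) (hz : z.im ≠ 0) {g : Lp ℂ 2 ω}
    (hg : ⟪invSub hφ hz, g⟫_ℂ = 0) :
    mulInvSub (im_conj_ne_zero hz) g ∈ T.domain := by
  have hmul := id_mul_mulInvSub (im_conj_ne_zero hz) g
  refine (hT.mem_domain_iff _).mpr ⟨(memLp_congr_ae hmul).mp (Lp.memLp _), ?_⟩
  rw [integral_eq_inner_invSub hφ hz hmul, add_sub_cancel_right, hg]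

lemma apply_mulInvSub (hT : IsMeanZeroCoordMul T)
    (hφ : Integrable (fun l : ℝ => (1 + l ^ 2)⁻¹) ω) (hz : z.im ≠ 0) {g : Lp ℂ 2 ω}
    (hg : ⟪invSub hφ hz, g⟫_ℂ = 0) :
    T ⟨_, hT.mulInvSub_mem_domain hφ hz hg⟩ = g + conj z • mulInvSub (im_conj_ne_zero hz) g :=
  Lp.ext ((hT.ae_eq_id_mul _).trans (id_mul_mulInvSub _ g).symm)

lemma invSub_mem_defSpace (hT : IsMeanZeroCoordMul T)
    (hφ : Integrable (fun l : ℝ => (1 + l ^ 2)⁻¹) ω) (hz : z.im ≠ 0) :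
    invSub hφ hz ∈ defSpace T z := by
  intro f
  have h := integral_eq_inner_invSub hφ hz (hT.ae_eq_id_mul f)
  rw [((hT.mem_domain_iff f).mp f.2).2, inner_sub_right, inner_smul_right] at h
  rw [inner_smul_left]
  linear_combination -h

lemma defSpace_eq_span (hT : IsMeanZeroCoordMul T)
    (hφ : Integrable (fun l : ℝ => (1 + l ^ 2)⁻¹) ω) (hz : z.im ≠ 0) :
    defSpace T z = ℂ ∙ invSub hφ hz := by
  refine le_antisymm (fun u hu => mem_span_singleton_of_forall_inner_eq_zero fun g hg => ?_)
    ((Submodule.span_singleton_le_iff_mem _ _).mpr (hT.invSub_mem_defSpace hφ hz))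
  have h := hu ⟨_, hT.mulInvSub_mem_domain hφ hz hg⟩
  rw [hT.apply_mulInvSub hφ hz hg, inner_add_right, inner_smul_right, inner_smul_left] at h
  linear_combination h

lemma dense_domain (hT : IsMeanZeroCoordMul T)
    (hφ : Integrable (fun l : ℝ => (1 + l ^ 2)⁻¹) ω) (hinf : ω Set.univ = ⊤) :
    Dense (T.domain : Set (Lp ℂ 2 ω)) := by
  have hI : I.im ≠ 0 := by simp
  rw [Submodule.dense_iff_topologicalClosure_eq_top, Submodule.topologicalClosure_eq_top_iff,
    Submodule.eq_bot_iff]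
  intro h hh
  have hspan : mulInvSub hI h ∈ ℂ ∙ invSub hφ hI :=
    mem_span_singleton_of_forall_inner_eq_zero fun g hg => by
      rw [← inner_mulInvSub_conj]
      exact Submodule.inner_left_of_mem_orthogonal (hT.mulInvSub_mem_domain hφ hI hg) hh
  obtain ⟨c, hc⟩ := Submodule.mem_span_singleton.mp hspan
  have h_const : (h : ℝ → ℂ) =ᵐ[ω] fun _ => c := by
    filter_upwards [Lp.ext_iff.mp hc, Lp.coeFn_smul c (invSub hφ hI), coeFn_invSub hφ hI,
      coeFn_mulInvSub hI h] with l hcl hsmul hG hM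
    rw [hsmul, hM, Pi.smul_apply, hG, smul_eq_mul] at hcl
    exact mul_left_cancel₀ (inv_ne_zero (ofReal_sub_ne_zero hI l)) (hcl.symm.trans (mul_comm _ _))
  have hc0 : c = 0 := by
    simpa [hinf] using (memLp_const_iff two_ne_zero ENNReal.ofNat_ne_top).mp
      ((memLp_congr_ae h_const).mp (Lp.memLp h))
  rw [hc0] at h_const
  exact Lp.ext (h_const.trans (Lp.coeFn_zero ℂ 2 ω).symm)

lemma isClosed_graph (hT : IsMeanZeroCoordMul T)
    (hφ : Integrable (fun l : ℝ => (1 + l ^ 2)⁻¹) ω) :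
    IsClosed (T.graph : Set (Lp ℂ 2 ω × Lp ℂ 2 ω)) := by
  have hI : I.im ≠ 0 := by simp
  have hgraph : (T.graph : Set (Lp ℂ 2 ω × Lp ℂ 2 ω)) =
      {p | mulInvSub hI p.2 = p.1 + I • mulInvSub hI p.1} ∩
        {p | ⟪invSub hφ hI, p.2 - conj I • p.1⟫_ℂ = 0} := by
    ext ⟨x, y⟩
    simp only [SetLike.mem_coe, LinearPMap.mem_graph_iff, Set.mem_inter_iff, Set.mem_ofPred_eq]
    constructor
    · rintro ⟨f, rfl, rfl⟩
      have h := hT.ae_eq_id_mul f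
      exact ⟨(ae_eq_id_mul_iff hI).mp h,
        by rw [← integral_eq_inner_invSub hφ hI h, ((hT.mem_domain_iff f).mp f.2).2]⟩
    · rintro ⟨hxy, hint⟩
      have h := (ae_eq_id_mul_iff hI).mpr hxy
      have hx : x ∈ T.domain := (hT.mem_domain_iff x).mpr
        ⟨(memLp_congr_ae h).mp (Lp.memLp y), by rw [integral_eq_inner_invSub hφ hI h, hint]⟩
      exact ⟨⟨x, hx⟩, rfl, Lp.ext ((hT.ae_eq_id_mul _).trans h.symm)⟩
  rw [hgraph]
  exact (isClosed_eq (by fun_prop) (by fun_prop)).inter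
    (isClosed_eq (by fun_prop) continuous_const)

end IsMeanZeroCoordMul

lemma invSub_ne_zero (hω : ω ≠ 0) (hφ : Integrable (fun l : ℝ => (1 + l ^ 2)⁻¹) ω)
    (hz : z.im ≠ 0) : invSub hφ hz ≠ 0 := by
  intro h0
  have hG := coeFn_invSub hφ hz
  rw [h0] at hG
  have : ∀ᵐ _ ∂ω, False := by
    filter_upwards [hG, Lp.coeFn_zero ℂ 2 ω] with l hG0 hzero
    exact inv_ne_zero (ofReal_sub_ne_zero hz l) (hG0.symm.trans hzero)
  exact hω (ae_eq_bot.mp (eventually_false_iff_eq_bot.mp this))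

lemma mem_span_invSub_iff (hφ : Integrable (fun l : ℝ => (1 + l ^ 2)⁻¹) ω)
    (hz : z.im ≠ 0) {u : Lp ℂ 2 ω} :
    u ∈ ℂ ∙ invSub hφ hz ↔ ∃ c : ℂ, (u : ℝ → ℂ) =ᵐ[ω] fun l : ℝ => c * ((l : ℂ) - z)⁻¹ := by
  rw [Submodule.mem_span_singleton]
  refine exists_congr fun c => ?_
  have hsmul :
      ((c • invSub hφ hz : Lp ℂ 2 ω) : ℝ → ℂ) =ᵐ[ω] fun l : ℝ => c * ((l : ℂ) - z)⁻¹ := by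
    filter_upwards [Lp.coeFn_smul c (invSub hφ hz), coeFn_invSub hφ hz] with l h1 h2
    rw [h1, Pi.smul_apply, h2, smul_eq_mul]
  rw [eq_comm, Lp.ext_iff]
  exact ⟨fun h => h.trans hsmul, fun h => h.trans hsmul.symm⟩

end MulByCoordinate

open MulByCoordinate in
theorem statement7_general
    (ω : Measure ℝ)
    (hnorm : ∫ lam : ℝ, (1 + lam ^ 2)⁻¹ ∂ω = 1)
    (hinf : ω Set.univ = ⊤)
    (Hhat Hdot : Lp ℂ 2 ω →ₗ.[ℂ] Lp ℂ 2 ω)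
    -- Ĥ is multiplication by λ on dom(Ĥ) = L²(ℝ;(1+λ²)dω):
    (hHdom : ∀ f : Lp ℂ 2 ω, f ∈ Hhat.domain ↔
      MemLp (fun lam : ℝ => (lam : ℂ) * (f : ℝ → ℂ) lam) 2 ω)
    -- Ḣ̂ is the restriction of Ĥ to {f ∈ dom Ĥ : ∫ f dω = 0}:
    (hDdom : ∀ f : Lp ℂ 2 ω, f ∈ Hdot.domain ↔
      (f ∈ Hhat.domain ∧ ∫ lam : ℝ, (f : ℝ → ℂ) lam ∂ω = 0))
    (hDact : ∀ f : Hdot.domain,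
      (Hdot f : ℝ → ℂ) =ᵐ[ω] fun lam : ℝ => (lam : ℂ) * ((f : Lp ℂ 2 ω) : ℝ → ℂ) lam) :
    Dense (Hdot.domain : Set (Lp ℂ 2 ω)) ∧
    PMapSymmetric Hdot ∧
    IsClosed (Hdot.graph : Set (Lp ℂ 2 ω × Lp ℂ 2 ω)) ∧
    -- deficiency indices (1,1):
    Module.rank ℂ (defSpace Hdot Complex.I) = 1 ∧
    Module.rank ℂ (defSpace Hdot (-Complex.I)) = 1 ∧
    -- ker(Ḣ̂* - z) = ℂ · (λ - z)⁻¹ for every z ∈ ℂ∖ℝ: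
    (∀ z : ℂ, z.im ≠ 0 → ∀ u : Lp ℂ 2 ω,
      u ∈ defSpace Hdot z ↔
        ∃ c : ℂ, (u : ℝ → ℂ) =ᵐ[ω] fun lam : ℝ => c * ((lam : ℂ) - z)⁻¹) := by
  have hφ : Integrable (fun l : ℝ => (1 + l ^ 2)⁻¹) ω :=
    Integrable.of_integral_ne_zero (by rw [hnorm]; exact one_ne_zero)
  have hT : IsMeanZeroCoordMul Hdot := ⟨fun f => by rw [hDdom, hHdom], hDact⟩
  have hω : ω ≠ 0 := fun h => by simp [h] at hinf
  have rank_eq_one (z : ℂ) (hz : z.im ≠ 0) : Module.rank ℂ (defSpace Hdot z) = 1 := by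
    rw [hT.defSpace_eq_span hφ hz, ← Module.finrank_eq_rank,
      finrank_span_singleton (invSub_ne_zero hω hφ hz), Nat.cast_one]
  exact ⟨hT.dense_domain hφ hinf, pMapSymmetric_of_ae_eq_id_mul hDact, hT.isClosed_graph hφ,
    rank_eq_one I (by simp), rank_eq_one (-I) (by simp),
    fun z hz u => by rw [hT.defSpace_eq_span hφ hz, mem_span_invSub_iff]⟩

/-- Theorem 3.4, specialized as in Section 4, of
Gesztesy–Kalton–Makarov–Tsekanovskii.  Let `ω` be a Borel measure on `ℝ` with
`∫ (1+λ²)⁻¹ dω = 1` and `ω(ℝ) = ∞`, let `Ĥ` be multiplication by `λ` in `L²(ℝ;dω)`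
with domain `L²(ℝ;(1+λ²)dω)`, and `Ḣ̂` its restriction to
`{f ∈ dom Ĥ : ∫ f dω = 0}`.  Then `Ḣ̂` is densely defined, closed and symmetric with
deficiency indices `(1,1)`, and for every `z ∈ ℂ∖ℝ`,
`ker(Ḣ̂* - z) = {c (λ-z)⁻¹ : c ∈ ℂ}`. -/
theorem statement7
    (ω : Measure ℝ)
    (hnorm : ∫ lam : ℝ, (1 + lam ^ 2)⁻¹ ∂ω = 1)
    (hinf : ω Set.univ = ⊤)
    (Hhat Hdot : Lp ℂ 2 ω →ₗ.[ℂ] Lp ℂ 2 ω)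
    -- Ĥ is multiplication by λ on dom(Ĥ) = L²(ℝ;(1+λ²)dω):
    (hHdom : ∀ f : Lp ℂ 2 ω, f ∈ Hhat.domain ↔
      MemLp (fun lam : ℝ => (lam : ℂ) * (f : ℝ → ℂ) lam) 2 ω)
    (hHact : ∀ f : Hhat.domain,
      (Hhat f : ℝ → ℂ) =ᵐ[ω] fun lam : ℝ => (lam : ℂ) * ((f : Lp ℂ 2 ω) : ℝ → ℂ) lam)
    -- Ḣ̂ is the restriction of Ĥ to {f ∈ dom Ĥ : ∫ f dω = 0}:
    (hDdom : ∀ f : Lp ℂ 2 ω, f ∈ Hdot.domain ↔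
      (f ∈ Hhat.domain ∧ ∫ lam : ℝ, (f : ℝ → ℂ) lam ∂ω = 0))
    (hDact : ∀ f : Hdot.domain,
      (Hdot f : ℝ → ℂ) =ᵐ[ω] fun lam : ℝ => (lam : ℂ) * ((f : Lp ℂ 2 ω) : ℝ → ℂ) lam) :
    Dense (Hdot.domain : Set (Lp ℂ 2 ω)) ∧
    PMapSymmetric Hdot ∧
    IsClosed (Hdot.graph : Set (Lp ℂ 2 ω × Lp ℂ 2 ω)) ∧
    -- deficiency indices (1,1):
    Module.rank ℂ (defSpace Hdot Complex.I) = 1 ∧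
    Module.rank ℂ (defSpace Hdot (-Complex.I)) = 1 ∧
    -- ker(Ḣ̂* - z) = ℂ · (λ - z)⁻¹ for every z ∈ ℂ∖ℝ:
    (∀ z : ℂ, z.im ≠ 0 → ∀ u : Lp ℂ 2 ω,
      u ∈ defSpace Hdot z ↔
        ∃ c : ℂ, (u : ℝ → ℂ) =ᵐ[ω] fun lam : ℝ => c * ((lam : ℂ) - z)⁻¹) :=
  statement7_general ω hnorm hinf Hhat Hdot hHdom hDdom hDact
end

section
/- Let ω be a Borel measure on ℝ with ∫_ℝ (1+λ²)^{-1} dω(λ) = 1 and ω(ℝ) = ∞, let Ĥ be multiplication by λ in L²(ℝ; dω) with dom(Ĥ) = L²(ℝ; (1+λ²)dω), and Ḣ̂ its restriction to {f ∈ dom(Ĥ) : ∫_ℝ f dω = 0}. Set g(λ) = (∫_ℝ (1+ν²)^{-2} dω(ν))^{-1/2} (1+λ²)^{-1}, so that ‖g‖_{L²(ω)} = 1 and dom(Ĥ) = ℂ·g ∔ dom(Ḣ̂), and let ℓ be the linear functional on dom(Ĥ) defined by ℓ(f) = c when f = c·g + h with h ∈ dom(Ḣ̂). Then sup over f ∈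 dom(Ĥ), f ≠ 0, of |ℓ(f)|² / (‖f‖²_{L²(ω)} + ‖Ĥf‖²_{L²(ω)}) equals ∫_ℝ (1+λ²)^{-2} dω(λ). -/
/-!
In the graph norm of `Ĥ`, `‖f‖² + ‖Ĥf‖² = ∫ (1+λ²)|f|² dω`, while `ℓ(f)` is `∫ f dω` divided
by `∫ g dω = (∫ (1+λ²)⁻² dω)^{-1/2}`. Writing `f = (1+λ²)^{1/2} f · (1+λ²)^{-1/2}`,
Cauchy–Schwarz gives `|∫ f dω|² ≤ ∫ (1+λ²)|f|² dω · ∫ (1+λ²)⁻¹ dω = ‖f‖² + ‖Ĥf‖²`, so the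
quotient is at most `∫ (1+λ²)⁻² dω`. Equality holds for `f = g`, the case of equality in
Cauchy–Schwarz.
-/

open MeasureTheory

theorem Real.sq_rpow_neg_one_half {x : ℝ} (hx : 0 ≤ x) : (x ^ (-(1 / 2 : ℝ))) ^ 2 = x⁻¹ := by
  rw [← Real.rpow_natCast, ← Real.rpow_mul hx]
  norm_num [Real.rpow_neg_one]

theorem integral_pos_of_forall_pos {α : Type*} [MeasurableSpace α] {μ : Measure α} [NeZero μ]
    {f : α → ℝ} (hf : ∀ a, 0 < f a) (hfi : Integrable f μ) : 0 < ∫ a, f a ∂μ := by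
  rw [integral_pos_iff_support_of_nonneg (fun a ↦ (hf a).le) hfi,
    Function.support_eq_univ fun a ↦ (hf a).ne']
  exact Measure.measure_univ_pos.2 (NeZero.ne μ)

theorem MeasureTheory.Lp.norm_sq_eq_integral_norm_sq {α : Type*} [MeasurableSpace α] {μ : Measure α}
    {𝕜 E : Type*} [RCLike 𝕜] [NormedAddCommGroup E] [InnerProductSpace 𝕜 E] (f : Lp E 2 μ) :
    ‖f‖ ^ 2 = ∫ a, ‖f a‖ ^ 2 ∂μ := by
  apply RCLike.ofReal_injective (K := 𝕜)
  rw [← integral_ofReal]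
  push_cast
  simp_rw [← inner_self_eq_norm_sq_to_K]
  exact L2.inner_def f f

section Weighted
variable {α : Type*} [MeasurableSpace α] {μ : Measure α} {E : Type*} [NormedAddCommGroup E]
  {w : α → ℝ} {φ : α → E}

theorem aestronglyMeasurable_of_integrable_inv (h : Integrable (fun a ↦ (w a)⁻¹) μ) :
    AEStronglyMeasurable w μ := by
  simpa only [Pi.inv_def, inv_inv] using h.aemeasurable.inv.aestronglyMeasurable

theorem memLp_two_sqrt_mul_norm (hw : AEStronglyMeasurable w μ) (hw0 : ∀ a, 0 < w a)
    (hφ : AEStronglyMeasurable φ μ) (h : Integrable (fun a ↦ w a * ‖φ a‖ ^ 2) μ) :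
    MemLp (fun a ↦ √(w a) * ‖φ a‖) 2 μ := by
  refine (memLp_two_iff_integrable_sq
    (hw.aemeasurable.sqrt.aestronglyMeasurable.mul hφ.norm)).2 (h.congr (ae_of_all _ fun a ↦ ?_))
  simp only [Pi.mul_apply, mul_pow, Real.sq_sqrt (hw0 a).le]

theorem memLp_two_inv_sqrt (hw : AEStronglyMeasurable w μ) (hw0 : ∀ a, 0 < w a)
    (h : Integrable (fun a ↦ (w a)⁻¹) μ) : MemLp (fun a ↦ (√(w a))⁻¹) 2 μ := by
  refine (memLp_two_iff_integrable_sq hw.aemeasurable.sqrt.inv.aestronglyMeasurable).2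
    (h.congr (ae_of_all _ fun a ↦ ?_))
  simp only [Pi.inv_apply, inv_pow, Real.sq_sqrt (hw0 a).le]

theorem integrable_of_integrable_weight_mul_norm_sq (hw0 : ∀ a, 0 < w a)
    (hφ : AEStronglyMeasurable φ μ) (h : Integrable (fun a ↦ w a * ‖φ a‖ ^ 2) μ)
    (hinv : Integrable (fun a ↦ (w a)⁻¹) μ) : Integrable φ μ := by
  have hw := aestronglyMeasurable_of_integrable_inv hinv
  refine ((memLp_two_inv_sqrt hw hw0 hinv).integrable_mul
    (memLp_two_sqrt_mul_norm hw hw0 hφ h)).mono hφ (ae_of_all _ fun a ↦ ?_)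
  rw [Pi.mul_apply, inv_mul_cancel_left₀ (Real.sqrt_ne_zero'.2 (hw0 a)), norm_norm]

theorem sq_norm_integral_le_integral_weight_mul_integral_inv [NormedSpace ℝ E]
    (hw0 : ∀ a, 0 < w a) (hφ : AEStronglyMeasurable φ μ)
    (h : Integrable (fun a ↦ w a * ‖φ a‖ ^ 2) μ) (hinv : Integrable (fun a ↦ (w a)⁻¹) μ) :
    ‖∫ a, φ a ∂μ‖ ^ 2 ≤ (∫ a, w a * ‖φ a‖ ^ 2 ∂μ) * ∫ a, (w a)⁻¹ ∂μ := by
  have hw := aestronglyMeasurable_of_integrable_inv hinv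
  have holder := integral_mul_le_Lp_mul_Lq_of_nonneg Real.HolderConjugate.two_two
    (f := fun a ↦ (√(w a))⁻¹) (g := fun a ↦ √(w a) * ‖φ a‖)
    (ae_of_all _ fun a ↦ by positivity) (ae_of_all _ fun a ↦ by positivity)
    (by simpa using memLp_two_inv_sqrt hw hw0 hinv)
    (by simpa using memLp_two_sqrt_mul_norm hw hw0 hφ h)
  simp only [Real.rpow_two, ← Real.sqrt_eq_rpow, inv_mul_cancel_left₀
    (Real.sqrt_ne_zero'.2 (hw0 _)), mul_pow, inv_pow, Real.sq_sqrt (hw0 _).le] at holder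
  calc ‖∫ a, φ a ∂μ‖ ^ 2 ≤ (∫ a, ‖φ a‖ ∂μ) ^ 2 :=
        pow_le_pow_left₀ (norm_nonneg _) (norm_integral_le_integral_norm φ) 2
    _ ≤ (√(∫ a, (w a)⁻¹ ∂μ) * √(∫ a, w a * ‖φ a‖ ^ 2 ∂μ)) ^ 2 := by gcongr
    _ = _ := by
        rw [mul_pow, Real.sq_sqrt (integral_nonneg fun a ↦ (inv_pos.2 (hw0 a)).le),
          Real.sq_sqrt (integral_nonneg fun a ↦ mul_nonneg (hw0 a).le (by positivity)), mul_comm]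

end Weighted

section Multiplication
variable {α : Type*} [MeasurableSpace α] {μ : Measure α} {m : α → ℝ} {f h : Lp ℂ 2 μ}

theorem integrable_one_add_sq_mul_norm_sq (hh : h =ᵐ[μ] fun a ↦ (m a : ℂ) * f a) :
    Integrable (fun a ↦ (1 + m a ^ 2) * ‖f a‖ ^ 2) μ := by
  have hf := (memLp_two_iff_integrable_sq_norm (Lp.aestronglyMeasurable f)).1 (Lp.memLp f)
  have hh' := (memLp_two_iff_integrable_sq_norm (Lp.aestronglyMeasurable h)).1 (Lp.memLp h)
  refine (hf.add hh').congr ?_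
  filter_upwards [hh] with a ha
  simp only [Pi.add_apply, ha, norm_mul, Complex.norm_real, Real.norm_eq_abs, mul_pow, sq_abs]
  ring

theorem norm_sq_add_norm_sq_eq_integral (hh : h =ᵐ[μ] fun a ↦ (m a : ℂ) * f a) :
    ‖f‖ ^ 2 + ‖h‖ ^ 2 = ∫ a, (1 + m a ^ 2) * ‖f a‖ ^ 2 ∂μ := by
  rw [Lp.norm_sq_eq_integral_norm_sq (𝕜 := ℂ), Lp.norm_sq_eq_integral_norm_sq (𝕜 := ℂ),
    ← integral_add]
  · refine integral_congr_ae ?_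
    filter_upwards [hh] with a ha
    simp only [ha, norm_mul, Complex.norm_real, Real.norm_eq_abs, mul_pow, sq_abs]
    ring
  all_goals exact (memLp_two_iff_integrable_sq_norm (Lp.aestronglyMeasurable _)).1 (Lp.memLp _)

theorem MeasureTheory.Lp.integrable_of_ae_eq_mul (hh : h =ᵐ[μ] fun a ↦ (m a : ℂ) * f a)
    (hm : Integrable (fun a ↦ (1 + m a ^ 2)⁻¹) μ) : Integrable f μ :=
  integrable_of_integrable_weight_mul_norm_sq (fun a ↦ by positivity) (Lp.aestronglyMeasurable f)
    (integrable_one_add_sq_mul_norm_sq hh) hm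

theorem sq_norm_integral_le_mul_norm_sq_add_norm_sq (hh : h =ᵐ[μ] fun a ↦ (m a : ℂ) * f a)
    (hm : Integrable (fun a ↦ (1 + m a ^ 2)⁻¹) μ) :
    ‖∫ a, f a ∂μ‖ ^ 2 ≤ (∫ a, (1 + m a ^ 2)⁻¹ ∂μ) * (‖f‖ ^ 2 + ‖h‖ ^ 2) := by
  rw [norm_sq_add_norm_sq_eq_integral hh, mul_comm]
  exact sq_norm_integral_le_integral_weight_mul_integral_inv (fun a ↦ by positivity)
    (Lp.aestronglyMeasurable f) (integrable_one_add_sq_mul_norm_sq hh) hm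

theorem integrable_inv_one_add_sq_sq (hm : Integrable (fun a ↦ (1 + m a ^ 2)⁻¹) μ) :
    Integrable (fun a ↦ ((1 + m a ^ 2) ^ 2)⁻¹) μ := by
  refine hm.mono' ?_ (ae_of_all _ fun a ↦ ?_)
  · simpa only [Pi.pow_def, inv_pow] using hm.aestronglyMeasurable.pow 2
  · rw [Real.norm_of_nonneg (by positivity)]
    exact inv_anti₀ (by positivity) (by nlinarith [sq_nonneg (m a)])

theorem integral_eq_of_ae_eq_mul_inv_one_add_sq {g : α → ℂ} {c : ℝ}
    (hg : g =ᵐ[μ] fun a ↦ (c : ℂ) * (((1 + m a ^ 2)⁻¹ : ℝ) : ℂ)) :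
    ∫ a, g a ∂μ = c * ((∫ a, (1 + m a ^ 2)⁻¹ ∂μ : ℝ) : ℂ) := by
  rw [integral_congr_ae hg, integral_const_mul, integral_complex_ofReal]

theorem integral_one_add_sq_mul_norm_sq_of_ae_eq {g : α → ℂ} {c : ℝ}
    (hg : g =ᵐ[μ] fun a ↦ (c : ℂ) * (((1 + m a ^ 2)⁻¹ : ℝ) : ℂ)) :
    ∫ a, (1 + m a ^ 2) * ‖g a‖ ^ 2 ∂μ = c ^ 2 * ∫ a, (1 + m a ^ 2)⁻¹ ∂μ := by
  rw [← integral_const_mul]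
  refine integral_congr_ae ?_
  filter_upwards [hg] with a ha
  have : 0 < 1 + m a ^ 2 := by positivity
  simp only [ha, norm_mul, Complex.norm_real, Real.norm_eq_abs, mul_pow, sq_abs]
  field_simp

end Multiplication

theorem statement15_general
    (ω : Measure ℝ)
    (hnorm : ∫ lam : ℝ, (1 + lam ^ 2)⁻¹ ∂ω = 1)
    (Hhat : Lp ℂ 2 ω →ₗ.[ℂ] Lp ℂ 2 ω)
    (hHact : ∀ f : Hhat.domain,
      (Hhat f : ℝ → ℂ) =ᵐ[ω] fun lam : ℝ => (lam : ℂ) * ((f : Lp ℂ 2 ω) : ℝ → ℂ) lam)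
    -- the normalized element g(λ) = (∫ (1+ν²)⁻² dω(ν))^{-1/2} (1+λ²)⁻¹ ∈ dom Ĥ:
    (g : Lp ℂ 2 ω)
    (hg : (g : ℝ → ℂ) =ᵐ[ω] fun lam : ℝ =>
      ((((∫ t : ℝ, ((1 + t ^ 2) ^ 2)⁻¹ ∂ω) ^ (-(1/2 : ℝ)) : ℝ) : ℂ) *
        (((1 + lam ^ 2)⁻¹ : ℝ) : ℂ)))
    (hgdom : g ∈ Hhat.domain)
    -- the linear functional ℓ on dom Ĥ: ℓ(f) = c iff f - c·g ∈ dom Ḣ̂, i.e.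
    -- iff ∫ (f - c g) dω = 0:
    (ℓ : Hhat.domain → ℂ)
    (hℓ : ∀ f : Hhat.domain,
      ∫ lam : ℝ, (((f : Lp ℂ 2 ω) : ℝ → ℂ) lam - ℓ f * (g : ℝ → ℂ) lam) ∂ω = 0) :
    IsLUB {r : ℝ | ∃ f : Hhat.domain, (f : Lp ℂ 2 ω) ≠ 0 ∧
        r = ‖ℓ f‖ ^ 2 / (‖(f : Lp ℂ 2 ω)‖ ^ 2 + ‖Hhat f‖ ^ 2)}
      (∫ lam : ℝ, ((1 + lam ^ 2) ^ 2)⁻¹ ∂ω) := by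
  set I := ∫ lam : ℝ, ((1 + lam ^ 2) ^ 2)⁻¹ ∂ω
  set c : ℝ := I ^ (-(1/2 : ℝ))
  have hint : Integrable (fun lam : ℝ ↦ (1 + lam ^ 2)⁻¹) ω :=
    Integrable.of_integral_ne_zero (by rw [hnorm]; exact one_ne_zero)
  have : NeZero ω := ⟨by rintro rfl; simp at hnorm⟩
  have hI : 0 < I := integral_pos_of_forall_pos (fun lam ↦ by positivity)
    (integrable_inv_one_add_sq_sq hint)
  have hc0 : (c : ℂ) ≠ 0 := Complex.ofReal_ne_zero.2 (Real.rpow_pos_of_pos hI _).ne'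
  have hgc : ∫ lam, (g : ℝ → ℂ) lam ∂ω = c := by
    rw [integral_eq_of_ae_eq_mul_inv_one_add_sq hg, hnorm, Complex.ofReal_one, mul_one]
  have hℓc (f : Hhat.domain) : ℓ f * c = ∫ lam, ((f : Lp ℂ 2 ω) : ℝ → ℂ) lam ∂ω := by
    have h := hℓ f
    rw [integral_sub (Lp.integrable_of_ae_eq_mul (hHact f) hint)
      ((Lp.integrable_of_ae_eq_mul (hHact ⟨g, hgdom⟩) hint).const_mul (ℓ f)),
      integral_const_mul, hgc, sub_eq_zero] at h
    exact h.symm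
  refine ⟨?_, fun b hb ↦ hb ⟨⟨g, hgdom⟩, ?_, ?_⟩⟩
  · rintro _ ⟨f, -, rfl⟩
    refine div_le_of_le_mul₀ (by positivity) hI.le ?_
    calc ‖ℓ f‖ ^ 2 = I * ‖ℓ f * c‖ ^ 2 := by
          rw [norm_mul, Complex.norm_real, Real.norm_eq_abs, mul_pow, sq_abs,
            Real.sq_rpow_neg_one_half hI.le]
          field_simp
      _ ≤ I * (‖(f : Lp ℂ 2 ω)‖ ^ 2 + ‖Hhat f‖ ^ 2) := by
          rw [hℓc]
          gcongr
          simpa [hnorm] using sq_norm_integral_le_mul_norm_sq_add_norm_sq (hHact f) hint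
  · rintro (hg0 : g = 0)
    rw [hg0, integral_congr_ae (Lp.coeFn_zero _ _ _), Pi.zero_def, integral_zero] at hgc
    exact hc0 hgc.symm
  · have hℓg : ℓ ⟨g, hgdom⟩ = 1 :=
      mul_right_cancel₀ hc0 (by rw [one_mul, hℓc, hgc])
    rw [hℓg, norm_sq_add_norm_sq_eq_integral (hHact ⟨g, hgdom⟩),
      integral_one_add_sq_mul_norm_sq_of_ae_eq hg, hnorm, mul_one,
      Real.sq_rpow_neg_one_half hI.le]
    simp

/-- Lemma 4.2 of Gesztesy–Kalton–Makarov–Tsekanovskii.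
Let `ω` be a Borel measure on `ℝ` with `∫ (1+λ²)⁻¹ dω = 1` and `ω(ℝ) = ∞`, `Ĥ`
multiplication by `λ` in `L²(ℝ;dω)` with domain `L²(ℝ;(1+λ²)dω)`, and
`g(λ) = (∫ (1+ν²)⁻² dω(ν))^{-1/2} (1+λ²)⁻¹`, so that
`dom Ĥ = ℂ·g ∔ dom Ḣ̂` with `dom Ḣ̂ = {f ∈ dom Ĥ : ∫ f dω = 0}`; let `ℓ(f) = c` when
`f = c·g + h`, `h ∈ dom Ḣ̂`.  Then
`sup_{0 ≠ f ∈ dom Ĥ} |ℓ(f)|²/(‖f‖² + ‖Ĥf‖²) = ∫ (1+λ²)⁻² dω(λ)`. -/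
theorem statement15
    (ω : Measure ℝ)
    (hnorm : ∫ lam : ℝ, (1 + lam ^ 2)⁻¹ ∂ω = 1)
    (hinf : ω Set.univ = ⊤)
    (Hhat : Lp ℂ 2 ω →ₗ.[ℂ] Lp ℂ 2 ω)
    (hHdom : ∀ f : Lp ℂ 2 ω, f ∈ Hhat.domain ↔
      MemLp (fun lam : ℝ => (lam : ℂ) * (f : ℝ → ℂ) lam) 2 ω)
    (hHact : ∀ f : Hhat.domain,
      (Hhat f : ℝ → ℂ) =ᵐ[ω] fun lam : ℝ => (lam : ℂ) * ((f : Lp ℂ 2 ω) : ℝ → ℂ) lam)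
    -- the normalized element g(λ) = (∫ (1+ν²)⁻² dω(ν))^{-1/2} (1+λ²)⁻¹ ∈ dom Ĥ:
    (g : Lp ℂ 2 ω)
    (hg : (g : ℝ → ℂ) =ᵐ[ω] fun lam : ℝ =>
      ((((∫ t : ℝ, ((1 + t ^ 2) ^ 2)⁻¹ ∂ω) ^ (-(1/2 : ℝ)) : ℝ) : ℂ) *
        (((1 + lam ^ 2)⁻¹ : ℝ) : ℂ)))
    (hgdom : g ∈ Hhat.domain)
    -- the linear functional ℓ on dom Ĥ: ℓ(f) = c iff f - c·g ∈ dom Ḣ̂, i.e.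
    -- iff ∫ (f - c g) dω = 0:
    (ℓ : Hhat.domain → ℂ)
    (hℓ : ∀ f : Hhat.domain,
      ∫ lam : ℝ, (((f : Lp ℂ 2 ω) : ℝ → ℂ) lam - ℓ f * (g : ℝ → ℂ) lam) ∂ω = 0) :
    IsLUB {r : ℝ | ∃ f : Hhat.domain, (f : Lp ℂ 2 ω) ≠ 0 ∧
        r = ‖ℓ f‖ ^ 2 / (‖(f : Lp ℂ 2 ω)‖ ^ 2 + ‖Hhat f‖ ^ 2)}
      (∫ lam : ℝ, ((1 + lam ^ 2) ^ 2)⁻¹ ∂ω) :=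
  statement15_general ω hnorm Hhat hHact g hg hgdom ℓ hℓ
end
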